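/- arXiv:2109.06529 — 7 statements merged into one kernel-verified Lean document; each statement's English description precedes it below -/
import Mathlib

section
/- Let d ≥ 1, a ∈ ℝ^d and α ∈ ℂ. Define, for t > 0 and y, z ∈ ℝ^d, p(t,y,z) = exp((α t / 2)·⟨a, z + y⟩) · exp(α²‖a‖² t³ / 24) · (2π t)^{-d/2} exp(-‖z - y‖²/(2t)). Then for every fixed z ∈ ℝ^d, the function (t,y) ↦ p(t,y,z) satisfies the parabolic equation with linear potential ∂_t p(t,y,z) = (1/2) Δ_y p(t,y,z) + α ⟨a, y⟩ p(t,y,z) for all t > 0 and y ∈ ℝ^d. -/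
open scoped RealInnerProductSpace

private lemma cpoly_hasDerivAt (K L M : ℂ) (s : ℝ) :
    HasDerivAt (fun x : ℝ => K + L * x + M * (x : ℂ) ^ 2) (L + 2 * M * s) s := by
  have h1 : HasDerivAt (fun x : ℂ => L * x) (L * 1) ((s : ℝ) : ℂ) :=
    (hasDerivAt_id _).const_mul L
  have h2 : HasDerivAt (fun x : ℂ => M * x ^ 2)
      (M * (((2 : ℕ) : ℂ) * ((s : ℝ) : ℂ) ^ (2 - 1))) ((s : ℝ) : ℂ) :=
    (hasDerivAt_pow 2 _).const_mul M
  have h3 := (h1.const_add K).add h2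
  have h4 : HasDerivAt (fun x : ℂ => K + L * x + M * x ^ 2) (L + 2 * M * (s : ℂ))
      ((s : ℝ) : ℂ) := by
    refine h3.congr_deriv ?_
    push_cast
    ring_nf
  exact h4.comp_ofReal

private lemma expPoly_hasDerivAt (K L M : ℂ) (s : ℝ) :
    HasDerivAt (fun x : ℝ => Complex.exp (K + L * x + M * (x : ℂ) ^ 2))
      (Complex.exp (K + L * s + M * (s : ℂ) ^ 2) * (L + 2 * M * s)) s :=
  (cpoly_hasDerivAt K L M s).cexp

private lemma expPoly_deriv2 (K L M : ℂ) :
    deriv (deriv (fun x : ℝ => Complex.exp (K + L * x + M * (x : ℂ) ^ 2))) 0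
      = Complex.exp K * (L * L + 2 * M) := by
  have hd : deriv (fun x : ℝ => Complex.exp (K + L * x + M * (x : ℂ) ^ 2))
      = fun s : ℝ => Complex.exp (K + L * s + M * (s : ℂ) ^ 2) * (L + 2 * M * s) :=
    funext fun s => (expPoly_hasDerivAt K L M s).deriv
  rw [hd]
  have hlin : HasDerivAt (fun s : ℝ => L + 2 * M * (s : ℂ)) (2 * M) (0 : ℝ) := by
    have h : HasDerivAt (fun x : ℂ => L + 2 * M * x) (2 * M * 1) ((0 : ℝ) : ℂ) :=
      ((hasDerivAt_id _).const_mul (2 * M)).const_add L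
    simpa using h.comp_ofReal
  rw [show deriv (fun s : ℝ => Complex.exp (K + L * s + M * (s : ℂ) ^ 2) * (L + 2 * M * s)) 0 = _
    from ((expPoly_hasDerivAt K L M 0).mul hlin).deriv]
  simp only [Complex.ofReal_zero, mul_zero, add_zero]
  ring

set_option maxHeartbeats 1000000 in
/-- Proposition 1.1, PDE-verification form: the explicit kernel
`p(t,y,z) = exp((αt/2)⟨a,z+y⟩) exp(α²‖a‖²t³/24) (2πt)^{-d/2} exp(-‖z-y‖²/(2t))`
satisfies `∂ₜ p = ½ Δ_y p + α⟨a,y⟩ p` for all `t > 0`. -/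
theorem stmt_0 (d : ℕ) (hd : 1 ≤ d) (a : EuclideanSpace ℝ (Fin d)) (α : ℂ)
    (p : ℝ → EuclideanSpace ℝ (Fin d) → EuclideanSpace ℝ (Fin d) → ℂ)
    (hp : ∀ (t : ℝ) (y z : EuclideanSpace ℝ (Fin d)), p t y z =
      Complex.exp (α * (t : ℂ) / 2 * (⟪a, z + y⟫ : ℂ)) *
        Complex.exp (α ^ 2 * ((‖a‖ : ℂ)) ^ 2 * (t : ℂ) ^ 3 / 24) *
        ((((2 * Real.pi * t) ^ (-(d : ℝ) / 2) *
          Real.exp (-‖z - y‖ ^ 2 / (2 * t))) : ℝ) : ℂ)) :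
    ∀ (z : EuclideanSpace ℝ (Fin d)), ∀ t > (0 : ℝ), ∀ (y : EuclideanSpace ℝ (Fin d)),
      deriv (fun τ : ℝ => p τ y z) t =
        (1 / 2 : ℂ) * (∑ i : Fin d,
            iteratedDeriv 2 (fun s : ℝ => p t (y + s • EuclideanSpace.single i (1 : ℝ)) z) 0)
          + α * (⟪a, y⟫ : ℂ) * p t y z := by
  intro z t ht y
  have htne : t ≠ 0 := ne_of_gt ht
  have htC : (t : ℂ) ≠ 0 := Complex.ofReal_ne_zero.mpr htne
  have h2πt : (0 : ℝ) < 2 * Real.pi * t := by positivity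
  set w : EuclideanSpace ℝ (Fin d) := z - y with hw
  set S : ℝ := ⟪a, z + y⟫ with hS
  set r : ℝ := ‖z - y‖ ^ 2 with hr
  set e : ℝ := -(d : ℝ) / 2 with he
  set c1 : ℂ := α * (S : ℂ) / 2 with hc1
  set c2 : ℂ := α ^ 2 * ((‖a‖ : ℂ)) ^ 2 / 24 with hc2
  set K : ℂ := c1 * t + c2 * (t : ℂ) ^ 3 +
      (((e * Real.log (2 * Real.pi * t) - r / 2 * t⁻¹ : ℝ)) : ℂ) with hK
  set L : Fin d → ℂ := fun i => α * t * ((a i : ℝ) : ℂ) / 2 + ((w i : ℝ) : ℂ) / t with hL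
  set M : ℂ := -(1 / (2 * (t : ℂ))) with hM
  -- pointwise formula in the space variable
  have hq : ∀ (i : Fin d) (s : ℝ), p t (y + s • EuclideanSpace.single i (1 : ℝ)) z
      = Complex.exp (K + L i * s + M * (s : ℂ) ^ 2) := by
    intro i s
    have h1 : (⟪a, z + (y + s • EuclideanSpace.single i (1 : ℝ))⟫ : ℝ) = S + s * a i := by
      simp [hS, inner_add_right, real_inner_smul_right, EuclideanSpace.inner_single_right]
      ring
    have h2 : ‖z - (y + s • EuclideanSpace.single i (1 : ℝ))‖ ^ 2 = r - 2 * s * w i + s ^ 2 := by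
      rw [sub_add_eq_sub_sub, ← hw, norm_sub_sq_real, real_inner_smul_right, norm_smul]
      simp only [EuclideanSpace.norm_single, norm_one, mul_one, EuclideanSpace.inner_single_right,
        RCLike.inner_apply, conj_trivial, Real.norm_eq_abs, mul_pow, sq_abs, one_mul]
      rw [hr, hw]
      ring
    rw [hp, h1, h2, Real.rpow_def_of_pos h2πt, Complex.ofReal_mul, Complex.ofReal_exp,
      Complex.ofReal_exp, ← Complex.exp_add, ← Complex.exp_add, ← Complex.exp_add]
    congr 1
    rw [hK, hc1, hc2, hL, hM, he]
    push_cast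
    ring
  -- pointwise formula in the time variable
  have hpt : ∀ τ : ℝ, 0 < τ → p τ y z = Complex.exp (c1 * τ + c2 * (τ : ℂ) ^ 3 +
      (((e * Real.log (2 * Real.pi * τ) - r / 2 * τ⁻¹ : ℝ)) : ℂ)) := by
    intro τ hτ
    have h2πτ : (0 : ℝ) < 2 * Real.pi * τ := by positivity
    rw [hp, Real.rpow_def_of_pos h2πτ, Complex.ofReal_mul, Complex.ofReal_exp,
      Complex.ofReal_exp, ← Complex.exp_add, ← Complex.exp_add, ← Complex.exp_add]
    congr 1
    rw [hc1, hc2, he, hS, hr]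
    push_cast
    field_simp
    ring
  have hpyz : p t y z = Complex.exp K := by
    rw [hpt t ht, hK]
  -- time derivative
  have hDlog : HasDerivAt (fun τ : ℝ => Real.log (2 * Real.pi * τ))
      ((2 * Real.pi * t)⁻¹ * (2 * Real.pi * 1)) t := by
    have h := (Real.hasDerivAt_log (ne_of_gt h2πt)).comp t
      ((hasDerivAt_id t).const_mul (2 * Real.pi))
    exact h
  have hg : HasDerivAt (fun τ : ℝ => e * Real.log (2 * Real.pi * τ) - r / 2 * τ⁻¹)
      (e * ((2 * Real.pi * t)⁻¹ * (2 * Real.pi * 1)) - r / 2 * (-(t ^ 2)⁻¹)) t :=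
    (hDlog.const_mul e).sub ((hasDerivAt_inv htne).const_mul (r / 2))
  have hψ : HasDerivAt (fun τ : ℝ => c1 * τ + c2 * (τ : ℂ) ^ 3 +
      (((e * Real.log (2 * Real.pi * τ) - r / 2 * τ⁻¹ : ℝ)) : ℂ))
      (c1 + c2 * (3 * (t : ℂ) ^ 2) +
        (((e * ((2 * Real.pi * t)⁻¹ * (2 * Real.pi * 1)) - r / 2 * (-(t ^ 2)⁻¹) : ℝ)) : ℂ)) t := by
    have h1 : HasDerivAt (fun x : ℂ => c1 * x) (c1 * 1) ((t : ℝ) : ℂ) :=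
      (hasDerivAt_id _).const_mul c1
    have h2 : HasDerivAt (fun x : ℂ => c2 * x ^ 3)
        (c2 * (((3 : ℕ) : ℂ) * ((t : ℝ) : ℂ) ^ (3 - 1))) ((t : ℝ) : ℂ) :=
      (hasDerivAt_pow 3 _).const_mul c2
    have h3 : HasDerivAt (fun x : ℂ => c1 * x + c2 * x ^ 3)
        (c1 + c2 * (3 * (t : ℂ) ^ 2)) ((t : ℝ) : ℂ) := by
      refine (h1.add h2).congr_deriv ?_
      push_cast
      ring
    exact (h3.comp_ofReal).add hg.ofReal_comp
  have htime : deriv (fun τ : ℝ => p τ y z) t = Complex.exp K *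
      (c1 + c2 * (3 * (t : ℂ) ^ 2) +
        (((e * ((2 * Real.pi * t)⁻¹ * (2 * Real.pi * 1)) - r / 2 * (-(t ^ 2)⁻¹) : ℝ)) : ℂ)) := by
    have hev : (fun τ : ℝ => p τ y z) =ᶠ[nhds t] (fun τ : ℝ =>
        Complex.exp (c1 * τ + c2 * (τ : ℂ) ^ 3 +
          (((e * Real.log (2 * Real.pi * τ) - r / 2 * τ⁻¹ : ℝ)) : ℂ))) := by
      filter_upwards [Ioi_mem_nhds ht] with τ hτ
      exact hpt τ hτ
    rw [hev.deriv_eq, hψ.cexp.deriv, hK]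
  have hred : e * ((2 * Real.pi * t)⁻¹ * (2 * Real.pi * 1)) - r / 2 * (-(t ^ 2)⁻¹)
      = e / t + r / (2 * t ^ 2) := by
    field_simp
    ring
  rw [hred] at htime
  -- second derivatives in space
  have hiter : ∀ i : Fin d,
      iteratedDeriv 2 (fun s : ℝ => p t (y + s • EuclideanSpace.single i (1 : ℝ)) z) 0
        = Complex.exp K * (L i * L i + 2 * M) := by
    intro i
    have hfun : (fun s : ℝ => p t (y + s • EuclideanSpace.single i (1 : ℝ)) z)
        = fun s : ℝ => Complex.exp (K + L i * s + M * (s : ℂ) ^ 2) := funext fun s => hq i s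
    rw [hfun, show (2 : ℕ) = 1 + 1 from rfl, iteratedDeriv_succ, iteratedDeriv_one]
    exact expPoly_deriv2 K (L i) M
  -- sum identities
  have ha2R : (∑ i, a i * a i) = ‖a‖ ^ 2 := by
    have h := real_inner_self_eq_norm_sq a
    rw [PiLp.inner_apply] at h
    simpa [← pow_two] using h
  have hw2R : (∑ i, w i * w i) = r := by
    have h := real_inner_self_eq_norm_sq w
    rw [PiLp.inner_apply] at h
    simpa [hr, hw, ← pow_two] using h
  have hawR : (∑ i, a i * w i) = ⟪a, z⟫ - ⟪a, y⟫ := by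
    have h : (⟪a, w⟫ : ℝ) = ⟪a, z⟫ - ⟪a, y⟫ := by rw [hw, inner_sub_right]
    rw [PiLp.inner_apply] at h
    simpa [mul_comm] using h
  have hsum : (∑ i : Fin d, (L i * L i + 2 * M)) =
      α ^ 2 * (t : ℂ) ^ 2 / 4 * ((‖a‖ : ℝ) : ℂ) ^ 2
        + α * (((⟪a, z⟫ - ⟪a, y⟫ : ℝ)) : ℂ) + ((r : ℝ) : ℂ) / (t : ℂ) ^ 2
        + (d : ℂ) * (2 * M) := by
    have hexp : ∀ i : Fin d, L i * L i + 2 * M =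
        (α ^ 2 * (t : ℂ) ^ 2 / 4) * (((a i : ℝ) : ℂ) * ((a i : ℝ) : ℂ))
          + α * (((a i : ℝ) : ℂ) * ((w i : ℝ) : ℂ))
          + ((t : ℂ) ^ 2)⁻¹ * (((w i : ℝ) : ℂ) * ((w i : ℝ) : ℂ)) + 2 * M := by
      intro i
      rw [hL]
      field_simp
      ring
    rw [Finset.sum_congr rfl fun i _ => hexp i]
    rw [Finset.sum_add_distrib, Finset.sum_add_distrib, Finset.sum_add_distrib,
      ← Finset.mul_sum, ← Finset.mul_sum, ← Finset.mul_sum,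
      Finset.sum_const, Finset.card_univ, Fintype.card_fin]
    have hc2a : (∑ i, ((a i : ℝ) : ℂ) * ((a i : ℝ) : ℂ)) = ((‖a‖ : ℝ) : ℂ) ^ 2 := by
      exact_mod_cast congrArg (Complex.ofReal) ha2R
    have hc2w : (∑ i, ((w i : ℝ) : ℂ) * ((w i : ℝ) : ℂ)) = ((r : ℝ) : ℂ) := by
      exact_mod_cast congrArg (Complex.ofReal) hw2R
    have hc2aw : (∑ i, ((a i : ℝ) : ℂ) * ((w i : ℝ) : ℂ)) = (((⟪a, z⟫ - ⟪a, y⟫ : ℝ)) : ℂ) := by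
      exact_mod_cast congrArg (Complex.ofReal) hawR
    rw [hc2a, hc2w, hc2aw]
    push_cast
    ring
  -- put everything together
  rw [htime, hpyz]
  simp only [hiter]
  rw [← Finset.mul_sum, hsum]
  have hSzy : S = ⟪a, z⟫ + ⟪a, y⟫ := by rw [hS, inner_add_right]
  rw [hc1, hc2, he, hM, hSzy]
  have hπC : ((Real.pi : ℝ) : ℂ) ≠ 0 := Complex.ofReal_ne_zero.mpr Real.pi_ne_zero
  push_cast
  field_simp [htC, hπC]
  ring
end

section
/- Let d ≥ 1, a ∈ ℝ^d, α ∈ ℂ, and define p(t,y,z) = exp((α t / 2)·⟨a, z + y⟩) · exp(α²‖a‖² t³ / 24) · (2π t)^{-d/2} exp(-‖z - y‖²/(2t)) for t > 0 and y, z ∈ ℝ^d. Then for every bounded continuous function f : ℝ^d → ℂ and every y ∈ ℝ^d, the integral ∫_{ℝ^d} p(t,y,z) f(z) dz converges to f(y) as t → 0⁺. -/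
open scoped RealInnerProductSpace
open MeasureTheory Real Filter Complex Set

private lemma cov' (d : ℕ) (y : EuclideanSpace ℝ (Fin d)) (g : EuclideanSpace ℝ (Fin d) → ℂ)
    {t : ℝ} (ht : 0 < t) :
    ∫ z, g z = ∫ u : EuclideanSpace ℝ (Fin d),
      ((Real.sqrt t ^ d : ℝ) : ℂ) * g (y + Real.sqrt t • u) := by
  have h1 : ∫ z, g z = ∫ z : EuclideanSpace ℝ (Fin d), g (y + z) :=
    (integral_add_left_eq_self g y).symm
  have h2 := Measure.integral_comp_smul_of_nonneg (volume : Measure (EuclideanSpace ℝ (Fin d)))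
    (fun z => g (y + z)) (Real.sqrt t) (hR := Real.sqrt_nonneg t)
  rw [finrank_euclideanSpace_fin] at h2
  have hpos : (0:ℝ) < Real.sqrt t ^ d := by positivity
  have h3 : ∫ u : EuclideanSpace ℝ (Fin d),
      ((Real.sqrt t ^ d : ℝ) : ℂ) * g (y + Real.sqrt t • u)
      = (Real.sqrt t ^ d : ℝ) • ∫ u : EuclideanSpace ℝ (Fin d), g (y + Real.sqrt t • u) := by
    simp only [← Complex.real_smul]
    exact integral_smul _ _
  rw [h1, h3, h2, smul_smul, mul_inv_cancel₀ hpos.ne', one_smul]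

private lemma realfact' (d : ℕ) (y u : EuclideanSpace ℝ (Fin d)) {t : ℝ} (ht : 0 < t) :
    Real.sqrt t ^ d * ((2 * π * t) ^ (-(d:ℝ)/2) * rexp (-‖(y + Real.sqrt t • u) - y‖^2/(2*t)))
      = (2*π) ^ (-(d:ℝ)/2) * rexp (-‖u‖^2/2) := by
  have h1 : (y + Real.sqrt t • u) - y = Real.sqrt t • u := add_sub_cancel_left y _
  have h2 : ‖Real.sqrt t • u‖^2 = t * ‖u‖^2 := by
    rw [norm_smul, Real.norm_eq_abs, _root_.abs_of_nonneg (Real.sqrt_nonneg t), mul_pow,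
      Real.sq_sqrt ht.le]
  have h3 : -(t * ‖u‖^2) / (2*t) = -‖u‖^2/2 := by field_simp
  have h4 : (2*π*t) ^ (-(d:ℝ)/2) = (2*π) ^ (-(d:ℝ)/2) * t ^ (-(d:ℝ)/2) :=
    Real.mul_rpow (by positivity) ht.le
  have h5 : Real.sqrt t ^ d = t ^ ((d:ℝ)/2) := by
    rw [Real.sqrt_eq_rpow, ← Real.rpow_natCast (t ^ (1/2 : ℝ)) d, ← Real.rpow_mul ht.le]
    ring_nf
  have h6 : t ^ ((d:ℝ)/2) * t ^ (-(d:ℝ)/2) = 1 := by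
    rw [← Real.rpow_add ht]
    ring_nf
    exact Real.rpow_zero t
  rw [h1, h2, h3, h4, h5]
  linear_combination ((2*π) ^ (-(d:ℝ)/2) * rexp (-‖u‖^2/2)) * h6

private lemma gauss_int' (d : ℕ) : ∫ u : EuclideanSpace ℝ (Fin d),
    ((2*π) ^ (-(d:ℝ)/2) * rexp (-‖u‖^2/2)) = 1 := by
  rw [integral_const_mul]
  have : ∀ u : EuclideanSpace ℝ (Fin d), rexp (-‖u‖^2/2) = rexp (-(1/2) * ‖u‖^2) := by
    intro u; ring_nf
  simp_rw [this]
  rw [GaussianFourier.integral_rexp_neg_mul_sq_norm (by norm_num : (0:ℝ) < 1/2),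
    finrank_euclideanSpace_fin]
  rw [show π / (1/2 : ℝ) = 2*π by ring, ← Real.rpow_add (by positivity),
    show (-(d:ℝ)/2 + (d:ℝ)/2) = 0 by ring, Real.rpow_zero]

private lemma gauss_integrable' (d : ℕ) :
    Integrable (fun u : EuclideanSpace ℝ (Fin d) => rexp (-‖u‖^2/4)) := by
  have h := (GaussianFourier.integrable_cexp_neg_mul_sq_norm_add (V := EuclideanSpace ℝ (Fin d))
    (b := (1/4 : ℂ)) (by norm_num) 0 0).norm
  refine h.congr (Filter.Eventually.of_forall fun u => ?_)
  dsimp only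
  rw [Complex.norm_exp]
  congr 1
  simp only [← Complex.ofReal_pow]
  norm_num
  rw [show ((‖u‖:ℂ)^2).re = ‖u‖^2 by rw [← Complex.ofReal_pow, Complex.ofReal_re]]
  ring

set_option maxHeartbeats 2000000 in
/-- Proposition 1.1, Dirac initial condition: the kernel
`p(t,y,z) = exp((αt/2)⟨a,z+y⟩) exp(α²‖a‖²t³/24) (2πt)^{-d/2} exp(-‖z-y‖²/(2t))`
satisfies `∫ p(t,y,z) f(z) dz → f(y)` as `t → 0⁺` for every bounded continuous `f`. -/
theorem stmt_1 (d : ℕ) (hd : 1 ≤ d) (a : EuclideanSpace ℝ (Fin d)) (α : ℂ)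
    (p : ℝ → EuclideanSpace ℝ (Fin d) → EuclideanSpace ℝ (Fin d) → ℂ)
    (hp : ∀ (t : ℝ) (y z : EuclideanSpace ℝ (Fin d)), p t y z =
      Complex.exp (α * (t : ℂ) / 2 * (⟪a, z + y⟫ : ℂ)) *
        Complex.exp (α ^ 2 * ((‖a‖ : ℂ)) ^ 2 * (t : ℂ) ^ 3 / 24) *
        ((((2 * Real.pi * t) ^ (-(d : ℝ) / 2) *
          Real.exp (-‖z - y‖ ^ 2 / (2 * t))) : ℝ) : ℂ))
    (f : EuclideanSpace ℝ (Fin d) → ℂ) (hf : Continuous f)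
    (hfb : ∃ M : ℝ, ∀ x, ‖f x‖ ≤ M) (y : EuclideanSpace ℝ (Fin d)) :
    Filter.Tendsto (fun t : ℝ => ∫ z : EuclideanSpace ℝ (Fin d), p t y z * f z)
      (nhdsWithin 0 (Set.Ioi 0)) (nhds (f y)) := by
  obtain ⟨M, hM⟩ := hfb
  have hM0 : 0 ≤ M := le_trans (norm_nonneg _) (hM 0)
  set C : ℝ := ‖α‖ * ‖a‖ with hC
  have hC0 : 0 ≤ C := by positivity
  set D : ℝ := ‖α‖ ^ 2 * ‖a‖ ^ 2 / 24 with hD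
  set K : ℝ := M * Real.exp (D + C * ‖y‖ + C ^ 2) * (2 * π) ^ (-(d:ℝ)/2) with hK
  set F : ℝ → EuclideanSpace ℝ (Fin d) → ℂ := fun t u =>
    Complex.exp (α * (t : ℂ) / 2 * ((⟪a, (y + Real.sqrt t • u) + y⟫ : ℝ) : ℂ)) *
      Complex.exp (α ^ 2 * ((‖a‖ : ℂ)) ^ 2 * (t : ℂ) ^ 3 / 24) *
      ((((2 * π) ^ (-(d:ℝ)/2) * rexp (-‖u‖^2/2)) : ℝ) : ℂ) *
      f (y + Real.sqrt t • u) with hF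
  -- Step 1: change of variables identity
  have key : ∀ t ∈ Set.Ioi (0:ℝ), (∫ z, p t y z * f z) = ∫ u, F t u := by
    intro t ht
    rw [cov' d y (fun z => p t y z * f z) ht]
    congr 1
    funext u
    rw [hp t y (y + Real.sqrt t • u)]
    have hr : (((2*π) ^ (-(d:ℝ)/2) * rexp (-‖u‖^2/2) : ℝ) : ℂ)
        = ((Real.sqrt t ^ d : ℝ) : ℂ) *
          ((((2*π*t) ^ (-(d:ℝ)/2) * rexp (-‖(y + Real.sqrt t • u) - y‖^2/(2*t))) : ℝ) : ℂ) := by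
      rw [← realfact' d y u ht]
      push_cast
      ring
    simp only [hF]
    rw [hr]
    ring
  -- The limit function
  set L : EuclideanSpace ℝ (Fin d) → ℂ := fun u =>
    ((((2*π) ^ (-(d:ℝ)/2) * rexp (-‖u‖^2/2)) : ℝ) : ℂ) * f y with hL
  have hLint : (∫ u, L u) = f y := by
    simp only [hL]
    rw [integral_mul_const]
    have hco : (∫ u : EuclideanSpace ℝ (Fin d),
        ((((2*π) ^ (-(d:ℝ)/2) * rexp (-‖u‖^2/2)) : ℝ) : ℂ))
        = (((∫ u : EuclideanSpace ℝ (Fin d),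
            ((2*π) ^ (-(d:ℝ)/2) * rexp (-‖u‖^2/2))) : ℝ) : ℂ) := integral_ofReal
    rw [hco, gauss_int' d]
    norm_num
  -- Dominated convergence
  have hmeas : ∀ᶠ t in nhdsWithin (0:ℝ) (Set.Ioi 0),
      AEStronglyMeasurable (F t) volume := by
    refine Eventually.of_forall fun t => ?_
    have c1 : Continuous fun u : EuclideanSpace ℝ (Fin d) => y + Real.sqrt t • u :=
      continuous_const.add (continuous_const_smul (Real.sqrt t))
    have c2 : Continuous fun u : EuclideanSpace ℝ (Fin d) =>
        (⟪a, (y + Real.sqrt t • u) + y⟫ : ℝ) :=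
      continuous_const.inner (c1.add continuous_const)
    have c3 : Continuous (F t) := by
      simp only [hF]
      refine (((Complex.continuous_exp.comp
        (continuous_const.mul (Complex.continuous_ofReal.comp c2))).mul
        continuous_const).mul
        (Complex.continuous_ofReal.comp (continuous_const.mul
          (Real.continuous_exp.comp ((continuous_norm.pow 2).neg.div_const 2))))).mul
        (hf.comp c1)
    exact c3.aestronglyMeasurable
  have hbound : ∀ᶠ t in nhdsWithin (0:ℝ) (Set.Ioi 0),
      ∀ᵐ u : EuclideanSpace ℝ (Fin d), ‖F t u‖ ≤ K * rexp (-‖u‖^2/4) := by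
    filter_upwards [Ioc_mem_nhdsGT (zero_lt_one)] with t ht
    refine Eventually.of_forall fun u => ?_
    obtain ⟨ht0, ht1⟩ := ht
    have hs0 : 0 ≤ Real.sqrt t := Real.sqrt_nonneg t
    have hs1 : Real.sqrt t ≤ 1 := Real.sqrt_le_one.2 ht1
    have hA : (α * (t : ℂ) / 2 * ((⟪a, (y + Real.sqrt t • u) + y⟫ : ℝ) : ℂ)).re
        ≤ C * ‖y‖ + C * ‖u‖ := by
      refine le_trans (Complex.re_le_norm _) ?_
      have h2 : ‖(α * (t : ℂ) / 2 * ((⟪a, (y + Real.sqrt t • u) + y⟫ : ℝ) : ℂ))‖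
          = ‖α‖ * t / 2 * |⟪a, (y + Real.sqrt t • u) + y⟫| := by
        rw [norm_mul, norm_div, norm_mul, Complex.norm_real, Complex.norm_real, Real.norm_eq_abs,
          Real.norm_eq_abs, Complex.norm_two, _root_.abs_of_nonneg ht0.le]
      rw [h2]
      have h3 : |⟪a, (y + Real.sqrt t • u) + y⟫| ≤ ‖a‖ * (2*‖y‖ + Real.sqrt t * ‖u‖) := by
        refine le_trans (abs_real_inner_le_norm a _) ?_
        have h4 : ‖(y + Real.sqrt t • u) + y‖ ≤ 2*‖y‖ + Real.sqrt t * ‖u‖ := by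
          calc ‖(y + Real.sqrt t • u) + y‖ ≤ ‖y + Real.sqrt t • u‖ + ‖y‖ := norm_add_le _ _
            _ ≤ (‖y‖ + ‖Real.sqrt t • u‖) + ‖y‖ := by gcongr; exact norm_add_le _ _
            _ = 2*‖y‖ + Real.sqrt t * ‖u‖ := by
                rw [norm_smul, Real.norm_eq_abs, _root_.abs_of_nonneg hs0]; ring
        exact mul_le_mul_of_nonneg_left h4 (norm_nonneg a)
      calc ‖α‖ * t / 2 * |⟪a, (y + Real.sqrt t • u) + y⟫|
          ≤ ‖α‖ * t / 2 * (‖a‖ * (2*‖y‖ + Real.sqrt t * ‖u‖)) := by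
            refine mul_le_mul_of_nonneg_left h3 ?_
            positivity
        _ = C * (t * ‖y‖) + C * ((t * Real.sqrt t / 2) * ‖u‖) := by rw [hC]; ring
        _ ≤ C * ‖y‖ + C * ‖u‖ := by
            refine add_le_add (mul_le_mul_of_nonneg_left ?_ hC0)
              (mul_le_mul_of_nonneg_left ?_ hC0)
            · nlinarith [norm_nonneg y]
            · have h5 : t * Real.sqrt t ≤ 1 := by nlinarith
              nlinarith [norm_nonneg u, h5]
    have hB : (α ^ 2 * ((‖a‖ : ℂ)) ^ 2 * (t : ℂ) ^ 3 / 24).re ≤ D := by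
      refine le_trans (Complex.re_le_norm _) ?_
      have h2 : ‖(α ^ 2 * ((‖a‖ : ℂ)) ^ 2 * (t : ℂ) ^ 3 / 24)‖
          = ‖α‖ ^ 2 * ‖a‖ ^ 2 * t ^ 3 / 24 := by
        simp only [norm_div, norm_mul, norm_pow, Complex.norm_real, Real.norm_eq_abs, Complex.norm_ofNat]
        rw [_root_.abs_of_nonneg ht0.le, _root_.abs_of_nonneg (norm_nonneg a)]
      rw [h2, hD]
      have : t ^ 3 ≤ 1 := pow_le_one₀ ht0.le ht1
      nlinarith [sq_nonneg (‖α‖), sq_nonneg ‖a‖,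
        mul_nonneg (sq_nonneg (‖α‖)) (sq_nonneg ‖a‖)]
    have hnf : ‖f (y + Real.sqrt t • u)‖ ≤ M := hM _
    have hposr : (0:ℝ) ≤ (2*π) ^ (-(d:ℝ)/2) * rexp (-‖u‖^2/2) := by positivity
    have hnorm : ‖F t u‖ = rexp ((α * (t : ℂ) / 2 *
          ((⟪a, (y + Real.sqrt t • u) + y⟫ : ℝ) : ℂ)).re) *
        rexp ((α ^ 2 * ((‖a‖ : ℂ)) ^ 2 * (t : ℂ) ^ 3 / 24).re) *
        ((2*π) ^ (-(d:ℝ)/2) * rexp (-‖u‖^2/2)) * ‖f (y + Real.sqrt t • u)‖ := by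
      simp only [hF, norm_mul, Complex.norm_exp, Complex.norm_real, Real.norm_eq_abs,
        _root_.abs_of_nonneg hposr, _root_.abs_of_pos (Real.exp_pos _),
        _root_.abs_of_nonneg (by positivity : (0:ℝ) ≤ (2*π) ^ (-(d:ℝ)/2))]
    rw [hnorm]
    have e1 : rexp ((α * (t : ℂ) / 2 * ((⟪a, (y + Real.sqrt t • u) + y⟫ : ℝ) : ℂ)).re)
        ≤ rexp (C * ‖y‖ + C * ‖u‖) := Real.exp_le_exp.2 hA
    have e2 : rexp ((α ^ 2 * ((‖a‖ : ℂ)) ^ 2 * (t : ℂ) ^ 3 / 24).re) ≤ rexp D :=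
      Real.exp_le_exp.2 hB
    have step1 := mul_le_mul (mul_le_mul (mul_le_mul e1 e2 (Real.exp_pos _).le
      (Real.exp_pos _).le) (le_refl ((2*π) ^ (-(d:ℝ)/2) * rexp (-‖u‖^2/2))) hposr
      (by positivity)) hnf (norm_nonneg _) (by positivity)
    refine le_trans step1 ?_
    have hmono : rexp (C * ‖y‖ + C * ‖u‖) * rexp D * rexp (-‖u‖^2/2)
        ≤ rexp (D + C * ‖y‖ + C ^ 2) * rexp (-‖u‖^2/4) := by
      rw [← Real.exp_add, ← Real.exp_add, ← Real.exp_add]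
      exact Real.exp_le_exp.2 (by nlinarith [sq_nonneg (C - ‖u‖/2)])
    calc rexp (C * ‖y‖ + C * ‖u‖) * rexp D * ((2*π) ^ (-(d:ℝ)/2) * rexp (-‖u‖^2/2)) * M
        = (M * (2*π) ^ (-(d:ℝ)/2)) *
          (rexp (C * ‖y‖ + C * ‖u‖) * rexp D * rexp (-‖u‖^2/2)) := by ring
      _ ≤ (M * (2*π) ^ (-(d:ℝ)/2)) *
          (rexp (D + C * ‖y‖ + C ^ 2) * rexp (-‖u‖^2/4)) :=
          mul_le_mul_of_nonneg_left hmono (by positivity)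
      _ = K * rexp (-‖u‖^2/4) := by rw [hK]; ring
  have hbint : Integrable (fun u : EuclideanSpace ℝ (Fin d) => K * rexp (-‖u‖^2/4)) :=
    (gauss_integrable' d).const_mul K
  have hlim : ∀ᵐ u : EuclideanSpace ℝ (Fin d),
      Filter.Tendsto (fun t => F t u) (nhdsWithin (0:ℝ) (Set.Ioi 0)) (nhds (L u)) := by
    refine Eventually.of_forall fun u => ?_
    have c1 : Continuous fun t : ℝ => y + Real.sqrt t • u :=
      continuous_const.add (Real.continuous_sqrt.smul continuous_const)
    have c2 : Continuous fun t : ℝ => (⟪a, (y + Real.sqrt t • u) + y⟫ : ℝ) :=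
      continuous_const.inner (c1.add continuous_const)
    have hcont : Continuous (fun t : ℝ => F t u) := by
      simp only [hF]
      refine (((Complex.continuous_exp.comp
        (((continuous_const.mul Complex.continuous_ofReal).div_const 2).mul
          (Complex.continuous_ofReal.comp c2))).mul
        (Complex.continuous_exp.comp
          ((continuous_const.mul (Complex.continuous_ofReal.pow 3)).div_const 24))).mul
        continuous_const).mul (hf.comp c1)
    have h0 : F 0 u = L u := by
      simp only [hF, hL, Real.sqrt_zero, zero_smul, add_zero]
      norm_num
    have := (hcont.tendsto 0).mono_left (nhdsWithin_le_nhds (s := Set.Ioi (0:ℝ)))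
    rwa [h0] at this
  have htend := tendsto_integral_filter_of_dominated_convergence
    (μ := (volume : Measure (EuclideanSpace ℝ (Fin d))))
    (bound := fun u => K * rexp (-‖u‖^2/4)) hmeas hbound hbint hlim
  rw [hLint] at htend
  refine htend.congr' ?_
  filter_upwards [self_mem_nhdsWithin] with t ht
  exact (key t ht).symm
end

section
/- Let d ≥ 1 and a ∈ ℝ^d with a ≠ 0, and set σ²(t) = t³/12. Define, for t > 0, x, x' ∈ ℝ and y, y' ∈ ℝ^d, p(t,x,y) = (1/(√(2π) ‖a‖ σ(t))) · exp( -(x' - x - t⟨a, y + y'⟩/2)² / (2‖a‖² σ²(t)) ) · (2π t)^{-d/2} exp(-‖y' - y‖²/(2t)). Then for every fixed (x', y') ∈ ℝ × ℝ^d, the function (t,x,y) ↦ p(t,x,y) satisfies the Kolmogorov hypoelliptic equation ∂_t p = (1/2) Δ_y p + ⟨a, y⟩ ∂_x p for all t > 0, x ∈ ℝ, y ∈ ℝ^d. -/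
open scoped RealInnerProductSpace

lemma quad_hasDerivAt (A B C z : ℝ) :
    HasDerivAt (fun s : ℝ => A*s^2+B*s+C) (2*A*z+B) z := by
  have h := ((hasDerivAt_pow 2 z).const_mul A).add
    (((hasDerivAt_id z).const_mul B).add_const C)
  convert h using 1
  · rfl
  · rfl
  · funext s; simp; ring
  · simp; ring

lemma quad_exp_hasDerivAt (c A B C z : ℝ) :
    HasDerivAt (fun s : ℝ => c * Real.exp (A*s^2+B*s+C))
      (c * (2*A*z+B) * Real.exp (A*z^2+B*z+C)) z := by
  have h := ((quad_hasDerivAt A B C z).exp).const_mul c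
  convert h using 1
  · rfl
  · rfl
  ring

lemma quad_exp_iteratedDeriv2 (c A B C : ℝ) :
    iteratedDeriv 2 (fun s : ℝ => c * Real.exp (A*s^2+B*s+C)) 0
      = c * (B^2 + 2*A) * Real.exp C := by
  rw [iteratedDeriv_succ, iteratedDeriv_one]
  have hd : deriv (fun s : ℝ => c * Real.exp (A*s^2+B*s+C))
      = fun z => (c * (2*A*z+B)) * Real.exp (A*z^2+B*z+C) := by
    funext z
    simpa using (quad_exp_hasDerivAt c A B C z).deriv
  rw [hd]
  have hlin : HasDerivAt (fun z : ℝ => c * (2*A*z+B)) (c*(2*A)) 0 := by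
    have := (((hasDerivAt_id (0:ℝ)).const_mul (2*A)).add_const B).const_mul c
    simpa using this
  have hexp := (quad_hasDerivAt A B C 0).exp
  have h2 := hlin.mul hexp
  rw [show deriv (fun z => c * (2 * A * z + B) * Real.exp (A * z ^ 2 + B * z + C)) 0 = _ from h2.deriv]
  norm_num
  ring

lemma hasDerivAt_mul4 {f1 f2 f3 f4 : ℝ → ℝ} {r1 r2 r3 r4 t : ℝ}
    (h1 : HasDerivAt f1 (r1 * f1 t) t) (h2 : HasDerivAt f2 (r2 * f2 t) t)
    (h3 : HasDerivAt f3 (r3 * f3 t) t) (h4 : HasDerivAt f4 (r4 * f4 t) t) :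
    HasDerivAt (fun τ => f1 τ * f2 τ * (f3 τ * f4 τ))
      ((r1+r2+r3+r4) * (f1 t * f2 t * (f3 t * f4 t))) t := by
  have h := (h1.mul h2).mul (h3.mul h4)
  convert h using 1
  · rfl
  · rfl
  · rfl
  simp only [Pi.mul_apply]
  ring

set_option maxHeartbeats 1000000 in
/-- Corollary 1.3, linear Kolmogorov hypoelliptic equation,
PDE-verification form: with `σ²(t) = t³/12`, the explicit kernel satisfies
`∂ₜ p = ½ Δ_y p + ⟨a,y⟩ ∂ₓ p` for all `t > 0`. -/
theorem stmt_6 (d : ℕ) (hd : 1 ≤ d) (a : EuclideanSpace ℝ (Fin d)) (ha : a ≠ 0)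
    (x' : ℝ) (y' : EuclideanSpace ℝ (Fin d))
    (σsq : ℝ → ℝ) (hσ : ∀ t, σsq t = t ^ 3 / 12)
    (p : ℝ → ℝ → EuclideanSpace ℝ (Fin d) → ℝ)
    (hp : ∀ (t x : ℝ) (y : EuclideanSpace ℝ (Fin d)), p t x y =
      (1 / (Real.sqrt (2 * Real.pi) * ‖a‖ * Real.sqrt (σsq t))) *
        Real.exp (-(x' - x - t * ⟪a, y + y'⟫ / 2) ^ 2 / (2 * ‖a‖ ^ 2 * σsq t)) *
        ((2 * Real.pi * t) ^ (-(d : ℝ) / 2) * Real.exp (-‖y' - y‖ ^ 2 / (2 * t)))) :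
    ∀ t > (0 : ℝ), ∀ (x : ℝ) (y : EuclideanSpace ℝ (Fin d)),
      deriv (fun τ : ℝ => p τ x y) t =
        (1 / 2 : ℝ) * (∑ i : Fin d,
            iteratedDeriv 2 (fun s : ℝ => p t x (y + s • EuclideanSpace.single i (1 : ℝ))) 0)
          + ⟪a, y⟫ * deriv (fun u : ℝ => p t u y) x := by
  intro t ht x y
  have hπ : (0:ℝ) < Real.pi := Real.pi_pos
  have ht0 : t ≠ 0 := ne_of_gt ht
  have ht3 : (0:ℝ) < t^3/12 := by positivity
  set na : ℝ := ‖a‖ with hna'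
  have hna : (0:ℝ) < na := by rw [hna']; exact norm_pos_iff.mpr ha
  have hna0 : na ≠ 0 := ne_of_gt hna
  set α : ℝ := ⟪a, y + y'⟫ with hα
  set γ : ℝ := ⟪a, y⟫ with hγ
  set β : ℝ := ‖y' - y‖^2 with hβ
  set u : ℝ := x' - x - t*α/2 with hu
  set v : ℝ := na^2*(t^3/12) with hv
  have hv0 : v ≠ 0 := by rw [hv]; positivity
  set S : ℝ := Real.sqrt (t^3/12) with hS
  have hSpos : 0 < S := by rw [hS]; exact Real.sqrt_pos.mpr ht3
  have hS0 : S ≠ 0 := ne_of_gt hSpos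
  have hS2 : S^2 = t^3/12 := by rw [hS]; exact Real.sq_sqrt ht3.le
  set Q : ℝ := (2*Real.pi*t) ^ (-(d:ℝ)/2) with hQ
  set c0 : ℝ := 1/(Real.sqrt (2*Real.pi) * na) with hc0
  set E1 : ℝ := Real.exp (-u^2/(2*na^2*(t^3/12))) with hE1
  set E2 : ℝ := Real.exp (-β/(2*t)) with hE2
  have hP : p t x y = (c0/S) * E1 * (Q * E2) := by
    rw [hp, hσ, ← hα, ← hβ, ← hu, ← hE1, ← hS, ← hQ, ← hE2, hc0]
    ring
  have hQpos : 0 < Q := by rw [hQ]; exact Real.rpow_pos_of_pos (by positivity) _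
  have hc0pos : 0 < c0 := by rw [hc0]; positivity
  have hE1pos : 0 < E1 := by rw [hE1]; positivity
  have hE2pos : 0 < E2 := by rw [hE2]; positivity
  have hPpos : 0 < p t x y := by
    rw [hP]
    exact mul_pos (mul_pos (div_pos hc0pos hSpos) hE1pos) (mul_pos hQpos hE2pos)
  clear_value na α γ β u v S Q c0 E1 E2
  -- time derivative
  have hg : HasDerivAt (fun τ : ℝ => τ^3/12) (t^2/4) t := by
    have h := (hasDerivAt_pow 3 t).div_const 12
    convert h using 1
    · rfl
    · rfl
    push_cast; ring
  have hdT : deriv (fun τ : ℝ => p τ x y) t =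
      (-(3/(2*t)) + (α*u/(2*v) + 3*u^2/(2*t*v)) + (-(d:ℝ)/(2*t)) + β/(2*t^2)) * p t x y := by
    have hF : (fun τ : ℝ => p τ x y) = (fun τ : ℝ =>
        (c0 / Real.sqrt (τ^3/12)) *
        Real.exp (-(x'-x-τ*α/2)^2/(2*na^2*(τ^3/12))) *
        ((2*Real.pi*τ)^(-(d:ℝ)/2) * Real.exp (-β/(2*τ)))) := by
      funext τ
      rw [hp, hσ, ← hα, ← hβ, hc0]
      ring
    have h1 : HasDerivAt (fun τ : ℝ => c0 / Real.sqrt (τ^3/12))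
        ((-(3/(2*t))) * (c0 / Real.sqrt (t^3/12))) t := by
      have hsq : HasDerivAt (fun τ : ℝ => Real.sqrt (τ^3/12)) (1/(2*S) * (t^2/4)) t := by
        have h := (Real.hasDerivAt_sqrt (ne_of_gt ht3)).comp t hg
        rw [← hS] at h
        exact h
      have h := (hasDerivAt_const t c0).div hsq (by rw [← hS]; exact hS0)
      rw [← hS]
      convert h using 1
      · rfl
      · rfl
      · rfl
      rw [← hS]
      field_simp
      linear_combination (-12*c0) * hS2
    have h2 : HasDerivAt (fun τ : ℝ => Real.exp (-(x'-x-τ*α/2)^2/(2*na^2*(τ^3/12))))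
        ((α*u/(2*v) + 3*u^2/(2*t*v)) *
          Real.exp (-(x'-x-t*α/2)^2/(2*na^2*(t^3/12)))) t := by
      have hn : HasDerivAt (fun τ : ℝ => x'-x-τ*α/2) (-(α/2)) t := by
        have h := (((hasDerivAt_id t).mul_const α).div_const 2).const_sub (x'-x)
        simpa using h
      have hN : HasDerivAt (fun τ : ℝ => -(x'-x-τ*α/2)^2)
          (-(2*(x'-x-t*α/2)*(-(α/2)))) t := by
        have := (hn.pow 2).neg
        convert this using 1
        · rfl
        · rfl
        · rfl
        push_cast; ring
      have hD : HasDerivAt (fun τ : ℝ => 2*na^2*(τ^3/12)) (2*na^2*(t^2/4)) t :=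
        hg.const_mul (2*na^2)
      have hD0 : 2*na^2*(t^3/12) ≠ 0 := by positivity
      have h := ((hN.div hD hD0).exp)
      convert h using 1
      · rfl
      simp only [Pi.div_apply]
      rw [hv, ← hu]
      field_simp
      ring
    have h3 : HasDerivAt (fun τ : ℝ => (2*Real.pi*τ)^(-(d:ℝ)/2))
        ((-(d:ℝ)/(2*t)) * ((2*Real.pi*t)^(-(d:ℝ)/2))) t := by
      have hb : HasDerivAt (fun τ : ℝ => 2*Real.pi*τ) (2*Real.pi) t := by
        simpa using (hasDerivAt_id t).const_mul (2*Real.pi)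
      have hbt : (2*Real.pi*t) ≠ 0 := by positivity
      have h := (Real.hasDerivAt_rpow_const (p := -(d:ℝ)/2) (Or.inl hbt)).comp t hb
      convert h using 1
      · rfl
      · rfl
      · rfl
      rw [Real.rpow_sub_one hbt]
      field_simp
    have h4 : HasDerivAt (fun τ : ℝ => Real.exp (-β/(2*τ)))
        ((β/(2*t^2)) * Real.exp (-β/(2*t))) t := by
      have hD : HasDerivAt (fun τ : ℝ => 2*τ) (2:ℝ) t := by
        simpa using (hasDerivAt_id t).const_mul (2:ℝ)
      have hN := hasDerivAt_const t (-β)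
      have h := ((hN.div hD (by positivity)).exp)
      convert h using 1
      · rfl
      simp only [Pi.div_apply]
      field_simp
      ring
    rw [hF, (hasDerivAt_mul4 h1 h2 h3 h4).deriv, hP]
    beta_reduce
    rw [← hS, ← hQ, ← hu, ← hE1, ← hE2]
  -- x derivative
  have hdx : deriv (fun w : ℝ => p t w y) x = (u/v) * p t x y := by
    have hF : (fun w : ℝ => p t w y) = (fun w : ℝ =>
        ((c0/S) * (Q * E2)) * Real.exp ((-(1/(2*v)))*w^2 + ((x'-t*α/2)/v)*w +
          (-(x'-t*α/2)^2/(2*v)))) := by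
      funext w
      rw [hp, hσ, ← hα, ← hβ, ← hS, ← hQ, ← hE2, hc0]
      rw [show -(x' - w - t*α/2)^2/(2*na^2*(t^3/12))
          = (-(1/(2*v)))*w^2 + ((x'-t*α/2)/v)*w + (-(x'-t*α/2)^2/(2*v)) from by
        rw [hv]; field_simp; ring]
      ring
    rw [hF, (quad_exp_hasDerivAt _ _ _ _ x).deriv, hP]
    rw [show (-(1/(2*v)))*x^2 + ((x'-t*α/2)/v)*x + (-(x'-t*α/2)^2/(2*v))
        = -u^2/(2*na^2*(t^3/12)) from by rw [hv, hu]; field_simp; ring]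
    rw [← hE1]
    rw [show 2*(-(1/(2*v)))*x + (x'-t*α/2)/v = u/v from by rw [hu]; field_simp; ring]
    ring
  -- Laplacian terms
  have hLi : ∀ i : Fin d,
      iteratedDeriv 2 (fun s : ℝ => p t x (y + s • EuclideanSpace.single i (1 : ℝ))) 0
      = ((u*(t*(a i))/(2*v) + ((y' - y) i)/t)^2
          + 2*(-(t*(a i)/2)^2/(2*v) - 1/(2*t))) * p t x y := by
    intro i
    set Ai : ℝ := -(t*(a i)/2)^2/(2*v) - 1/(2*t) with hAi
    set Bi : ℝ := u*(t*(a i))/(2*v) + ((y' - y) i)/t with hBi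
    have hF : (fun s : ℝ => p t x (y + s • EuclideanSpace.single i (1 : ℝ)))
        = (fun s : ℝ => ((c0/S) * Q) * Real.exp (Ai*s^2 + Bi*s +
            (-u^2/(2*v) + -β/(2*t)))) := by
      funext s
      rw [hp, hσ, ← hS, ← hQ, hc0]
      rw [show (‖y' - (y + s • EuclideanSpace.single i (1:ℝ))‖:ℝ) = ‖y' - (y + s • EuclideanSpace.single i (1:ℝ))‖ from rfl]
      have hinner : ⟪a, y + s • EuclideanSpace.single i (1:ℝ) + y'⟫ = α + s * (a i) := by
        rw [hα]
        simp [inner_add_right, real_inner_smul_right, EuclideanSpace.inner_single_right]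
        ring
      have hnorm : ‖y' - (y + s • EuclideanSpace.single i (1:ℝ))‖^2
          = β - 2*s*((y'-y) i) + s^2 := by
        rw [show y' - (y + s • EuclideanSpace.single i (1:ℝ))
            = (y' - y) - s • EuclideanSpace.single i (1:ℝ) by abel]
        rw [norm_sub_sq_real]
        rw [← hβ]
        simp [real_inner_smul_right, EuclideanSpace.inner_single_right, norm_smul,
          EuclideanSpace.norm_single]
        ring
      rw [hinner, hnorm]
      rw [show Ai*s^2 + Bi*s + (-u^2/(2*v) + -β/(2*t))
          = -(x' - x - t*(α + s*(a i))/2)^2/(2*na^2*(t^3/12))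
            + -(β - 2*s*((y'-y) i) + s^2)/(2*t) by
        rw [hAi, hBi, hv, hu]; field_simp; ring]
      rw [Real.exp_add]
      ring
    rw [hF, quad_exp_iteratedDeriv2, hP]
    rw [show -u^2/(2*v) + -β/(2*t) = -u^2/(2*na^2*(t^3/12)) + -β/(2*t) by
      rw [hv]; ring]
    rw [Real.exp_add, ← hE1, ← hE2]
    ring
  -- sums
  set w : EuclideanSpace ℝ (Fin d) := y' - y with hw
  have hSaa : ∑ i : Fin d, (a i)^2 = na^2 := by
    rw [hna', ← real_inner_self_eq_norm_sq]
    simp only [PiLp.inner_apply, RCLike.inner_apply, conj_trivial, sq]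
  have hSaw : ∑ i : Fin d, (a i) * (w i) = α - 2*γ := by
    have h1 : ∑ i : Fin d, (a i) * (w i) = ⟪a, w⟫ := by
      simp [PiLp.inner_apply]
      exact Finset.sum_congr rfl (fun i _ => mul_comm _ _)
    rw [h1, hw, inner_sub_right, hα, hγ, inner_add_right]
    ring
  have hSww : ∑ i : Fin d, (w i)^2 = β := by
    rw [hβ, ← real_inner_self_eq_norm_sq]
    simp only [PiLp.inner_apply, RCLike.inner_apply, conj_trivial, sq]
  have hsum : ∑ i : Fin d,
      (((u*(t*(a i))/(2*v) + (w i)/t)^2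
          + 2*(-(t*(a i)/2)^2/(2*v) - 1/(2*t))) * p t x y)
      = (((u*t/(2*v))^2 - t^2/(4*v)) * na^2 + (u/v)*(α - 2*γ)
          + (1/t^2)*β + (d:ℝ)*(-(1/t))) * p t x y := by
    rw [← Finset.sum_mul]
    congr 1
    have hterm : ∀ i : Fin d,
        ((u*(t*(a i))/(2*v) + (w i)/t)^2 + 2*(-(t*(a i)/2)^2/(2*v) - 1/(2*t)))
        = ((u*t/(2*v))^2 - t^2/(4*v)) * (a i)^2 + (u/v)*((a i)*(w i))
          + (1/t^2)*(w i)^2 + (-(1/t)) := by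
      intro i
      field_simp
      ring
    rw [Finset.sum_congr rfl (fun i _ => hterm i)]
    rw [Finset.sum_add_distrib, Finset.sum_add_distrib, Finset.sum_add_distrib,
      ← Finset.mul_sum, ← Finset.mul_sum, ← Finset.mul_sum, Finset.sum_const,
      Finset.card_univ, Fintype.card_fin, hSaa, hSaw, hSww]
    push_cast
    ring
  rw [hdT, hdx]
  rw [show (∑ i : Fin d,
      iteratedDeriv 2 (fun s : ℝ => p t x (y + s • EuclideanSpace.single i (1 : ℝ))) 0)
      = (((u*t/(2*v))^2 - t^2/(4*v)) * na^2 + (u/v)*(α - 2*γ)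
          + (1/t^2)*β + (d:ℝ)*(-(1/t))) * p t x y by
    rw [Finset.sum_congr rfl (fun i _ => hLi i), hsum]]
  rw [hv]
  field_simp
  ring
end

section
/- Let ζ > 0 and α ∈ ℂ. Define σ²_Z(t) = (1/ζ²) ∫_0^t (1 - e^{-ζ(t-u)})² du and σ²_ξ(t) = σ²_Z(t) − (1 - e^{-ζ t})³ / (2ζ³ (1 + e^{-ζ t})). Define, for t > 0 and y, z ∈ ℝ, p(t,y,z) = exp( α (y/ζ)(1 - e^{-ζ t}) ) · exp( (α/ζ)(z - y e^{-ζ t}) tanh(ζ t / 2) ) · exp( α² σ²_ξ(t) / 2 ) · √(ζ/π) · exp( -ζ (z - y e^{-ζ t})² / (1 - e^{-2ζ t}) ) / √(1 - e^{-2ζ t}). Then for every fixed z ∈ ℝ, the function (t,y) ↦ p(t,y,z) satisfies ∂_t p(t,y,z) = (1/2) ∂²_y p(t,y,z) − ζ y ∂_y p(t,y,z) + α y p(t,y,z) for all t > 0 and y ∈ ℝ. -/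
open Real Complex

noncomputable def Phi (ζ : ℝ) (α : ℂ) (z τ v : ℝ) : ℂ :=
  α * (v:ℂ) / (ζ:ℂ) * (1 - (Real.exp (-(ζ*τ)) : ℂ))
  + α / (ζ:ℂ) * (((z:ℂ) - (v:ℂ) * (Real.exp (-(ζ*τ)) : ℂ)) *
      ((1 - (Real.exp (-(ζ*τ)) : ℂ))/(1 + (Real.exp (-(ζ*τ)) : ℂ))))
  + α^2/2 * ((1/(ζ:ℂ)^2) * ((τ:ℂ) - 2*(1 - (Real.exp (-(ζ*τ)) : ℂ))/(ζ:ℂ)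
        + (1 - (Real.exp (-(ζ*τ)) : ℂ)^2)/(2*(ζ:ℂ)))
      - (1 - (Real.exp (-(ζ*τ)) : ℂ))^3/(2*(ζ:ℂ)^3*(1 + (Real.exp (-(ζ*τ)) : ℂ))))
  - (ζ:ℂ) * ((z:ℂ) - (v:ℂ)*(Real.exp (-(ζ*τ)) : ℂ))^2 / (1 - (Real.exp (-(ζ*τ)) : ℂ)^2)
  - (Real.log (1 - Real.exp (-(ζ*τ))^2) : ℂ)/2

lemma stmt8_exp_sq (a : ℝ) : Real.exp (-(2*a)) = Real.exp (-a)^2 := by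
  rw [sq, ← Real.exp_add]; congr 1; ring

lemma stmt8_tanh (x : ℝ) : Real.tanh (x/2) = (1 - Real.exp (-x))/(1 + Real.exp (-x)) := by
  have hu : Real.exp x = Real.exp (x/2) * Real.exp (x/2) := by rw [← Real.exp_add]; congr 1; ring
  rw [Real.tanh_eq_sinh_div_cosh, Real.sinh_eq, Real.cosh_eq]
  simp only [Real.exp_neg]
  rw [hu]
  have h := (Real.exp_pos (x/2)).ne'
  field_simp

lemma stmt8_integral (ζ : ℝ) (hζ : 0 < ζ) (τ : ℝ) :
    (∫ u in (0:ℝ)..τ, (1 - Real.exp (-(ζ * (τ - u)))) ^ 2)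
      = τ - 2*(1 - Real.exp (-(ζ*τ)))/ζ + (1 - Real.exp (-(ζ*τ))^2)/(2*ζ) := by
  have key : ∀ u ∈ Set.uIcc (0:ℝ) τ,
      HasDerivAt (fun u : ℝ => u - (2/ζ)*Real.exp (-(ζ*(τ-u))) + (1/(2*ζ))*Real.exp (-(2*ζ*(τ-u))))
        ((1 - Real.exp (-(ζ * (τ - u)))) ^ 2) u := by
    intro u _
    have h1 : HasDerivAt (fun u : ℝ => -(ζ*(τ-u))) ζ u := by
      exact ((((hasDerivAt_id u).const_sub τ).const_mul ζ).neg).congr_deriv (by ring)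
    have h2 : HasDerivAt (fun u : ℝ => -(2*ζ*(τ-u))) (2*ζ) u := by
      exact ((((hasDerivAt_id u).const_sub τ).const_mul (2*ζ)).neg).congr_deriv (by ring)
    have hF := ((hasDerivAt_id u).sub ((h1.exp).const_mul (2/ζ))).add
      ((h2.exp).const_mul (1/(2*ζ)))
    refine hF.congr_deriv (Eq.symm ?_)
    have he2 : Real.exp (-(2*ζ*(τ-u))) = Real.exp (-(ζ*(τ-u)))^2 := by
      rw [sq, ← Real.exp_add]; congr 1; ring
    rw [he2]
    field_simp
    ring
  have hInt : IntervalIntegrable (fun u : ℝ => (1 - Real.exp (-(ζ * (τ - u)))) ^ 2)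
      MeasureTheory.volume 0 τ := (by fun_prop : Continuous
        (fun u : ℝ => (1 - Real.exp (-(ζ * (τ - u)))) ^ 2)).intervalIntegrable 0 τ
  rw [intervalIntegral.integral_eq_sub_of_hasDerivAt key hInt]
  simp only [sub_self, mul_zero, neg_zero, Real.exp_zero, sub_zero]
  have h2e : Real.exp (-(2*ζ*τ)) = Real.exp (-(ζ*τ))^2 := by
    rw [sq, ← Real.exp_add]; congr 1; ring
  rw [h2e]
  field_simp
  ring

set_option maxHeartbeats 1000000 in
/-- Proposition 2.1, PDE-verification form: the explicit kernel for the
Ornstein–Uhlenbeck parabolic equation with linear potential satisfies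
`∂ₜ p = ½ ∂²_y p - ζ y ∂_y p + α y p` for all `t > 0`. -/
theorem stmt_8 (ζ : ℝ) (hζ : 0 < ζ) (α : ℂ)
    (σsqZ σsqξ : ℝ → ℝ)
    (hσZ : ∀ t, σsqZ t = (1 / ζ ^ 2) * ∫ u in (0:ℝ)..t, (1 - Real.exp (-(ζ * (t - u)))) ^ 2)
    (hσξ : ∀ t, σsqξ t = σsqZ t
      - (1 - Real.exp (-(ζ * t))) ^ 3 / (2 * ζ ^ 3 * (1 + Real.exp (-(ζ * t)))))
    (p : ℝ → ℝ → ℝ → ℂ)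
    (hp : ∀ (t y z : ℝ), p t y z =
      Complex.exp (α * ((y / ζ * (1 - Real.exp (-(ζ * t)))) : ℝ)) *
        Complex.exp (α / (ζ : ℂ) *
          (((z - y * Real.exp (-(ζ * t))) * Real.tanh (ζ * t / 2)) : ℝ)) *
        Complex.exp (α ^ 2 * (σsqξ t : ℝ) / 2) *
        ((Real.sqrt (ζ / Real.pi) *
          Real.exp (-(ζ * (z - y * Real.exp (-(ζ * t))) ^ 2 / (1 - Real.exp (-(2 * ζ * t)))))
            / Real.sqrt (1 - Real.exp (-(2 * ζ * t))) : ℝ) : ℂ)) :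
    ∀ (z : ℝ), ∀ t > (0 : ℝ), ∀ (y : ℝ),
      deriv (fun τ : ℝ => p τ y z) t =
        (1 / 2 : ℂ) * iteratedDeriv 2 (fun v : ℝ => p t v z) y
          - ((ζ * y : ℝ) : ℂ) * deriv (fun v : ℝ => p t v z) y
          + α * (y : ℂ) * p t y z := by
  have hζ' : (ζ:ℂ) ≠ 0 := by exact_mod_cast hζ.ne'
  have hσ : ∀ τ : ℝ, σsqξ τ = (1/ζ^2) * (τ - 2*(1 - Real.exp (-(ζ*τ)))/ζ
      + (1 - Real.exp (-(ζ*τ))^2)/(2*ζ))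
      - (1 - Real.exp (-(ζ*τ)))^3/(2*ζ^3*(1 + Real.exp (-(ζ*τ)))) := by
    intro τ
    rw [hσξ, hσZ, stmt8_integral ζ hζ τ]
  have hD : ∀ τ : ℝ, 0 < τ → 0 < 1 - Real.exp (-(ζ*τ))^2 := by
    intro τ hτ
    have h1 : Real.exp (-(ζ*τ)) < 1 := Real.exp_lt_one_iff.mpr (by nlinarith)
    have h0 : 0 < Real.exp (-(ζ*τ)) := Real.exp_pos _
    nlinarith
  intro z t ht y
  -- the kernel as a single exponential
  have hcomb : ∀ (a b c d C : ℂ), Complex.exp a * Complex.exp b * Complex.exp c *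
      (C * Complex.exp d) = C * Complex.exp (a+b+c+d) := by
    intro a b c d C
    rw [← Complex.exp_add, ← Complex.exp_add,
      show Complex.exp (a+b+c) * (C * Complex.exp d) = C * (Complex.exp (a+b+c) * Complex.exp d)
        by ring, ← Complex.exp_add]
  have hpΦ : ∀ τ : ℝ, 0 < τ → ∀ v : ℝ, p τ v z
      = ((Real.sqrt (ζ/Real.pi) : ℝ) : ℂ) * Complex.exp (Phi ζ α z τ v) := by
    intro τ hτ v
    have hDτ : 0 < 1 - Real.exp (-(ζ*τ))^2 := hD τ hτ
    have h2e : Real.exp (-(2*ζ*τ)) = Real.exp (-(ζ*τ))^2 := by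
      rw [sq, ← Real.exp_add]; congr 1; ring
    have hs : Real.sqrt (1 - Real.exp (-(ζ*τ))^2)
        = Real.exp (Real.log (1 - Real.exp (-(ζ*τ))^2) / 2) := by
      have h2 : Real.exp (Real.log (1 - Real.exp (-(ζ*τ))^2)/2)^2
          = 1 - Real.exp (-(ζ*τ))^2 := by
        rw [sq, ← Real.exp_add, add_halves, Real.exp_log hDτ]
      conv_lhs => rw [← h2]
      exact Real.sqrt_sq (Real.exp_pos _).le
    have hgauss : ∀ X L : ℝ, Real.sqrt (ζ/Real.pi) * Real.exp X / Real.exp L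
        = Real.sqrt (ζ/Real.pi) * Real.exp (X - L) := fun X L => by
      rw [mul_div_assoc, ← Real.exp_sub]
    rw [hp, hσ, stmt8_tanh (ζ*τ), h2e, hs, hgauss]
    push_cast
    rw [hcomb]
    congr 1
    simp only [Phi]
    push_cast
    ring
  -- nonvanishing facts at t
  have hErpos : (0:ℝ) < Real.exp (-(ζ*t)) := Real.exp_pos _
  have h1ne : (1:ℂ) + (Real.exp (-(ζ*t)) : ℂ) ≠ 0 := by
    exact_mod_cast (show (1:ℝ) + Real.exp (-(ζ*t)) ≠ 0 by positivity)
  have hDneR : (1:ℝ) - Real.exp (-(ζ*t))^2 ≠ 0 := (hD t ht).ne'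
  have hDne : (1:ℂ) - (Real.exp (-(ζ*t)) : ℂ)^2 ≠ 0 := by exact_mod_cast hDneR
  have h3ne : (2:ℂ)*(ζ:ℂ)^3*(1 + (Real.exp (-(ζ*t)) : ℂ)) ≠ 0 := by
    apply mul_ne_zero (mul_ne_zero two_ne_zero (pow_ne_zero 3 hζ')) h1ne
  have hEcr : ((Real.exp (-(ζ*t)) : ℝ) : ℂ) = Complex.exp (-((ζ:ℂ)*(t:ℂ))) := by
    rw [Complex.ofReal_exp]; norm_cast
  have hEc1 : (1:ℂ) + Complex.exp (-((ζ:ℂ)*(t:ℂ))) ≠ 0 := hEcr ▸ h1ne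
  have hEcD : (1:ℂ) - Complex.exp (-((ζ:ℂ)*(t:ℂ)))^2 ≠ 0 := hEcr ▸ hDne
  -- general power rule for ℝ → ℂ
  have cpow : ∀ (f : ℝ → ℂ) (f' : ℂ) (n : ℕ) (x : ℝ), HasDerivAt f f' x →
      HasDerivAt (fun τ => f τ ^ n) ((n:ℂ) * f x ^ (n-1) * f') x := fun f f' n x hf => by
    exact (hasDerivAt_pow n (f x)).comp x hf
  -- t-derivative
  have dE0 : HasDerivAt (fun τ:ℝ => -(ζ*τ)) (-ζ) t := by
    exact (((hasDerivAt_id t).const_mul ζ).neg).congr_deriv (by ring)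
  have dE : HasDerivAt (fun τ:ℝ => Real.exp (-(ζ*τ))) (Real.exp (-(ζ*t)) * -ζ) t := dE0.exp
  have dEc : HasDerivAt (fun τ:ℝ => (Real.exp (-(ζ*τ)) : ℂ)) ((Real.exp (-(ζ*t)) * -ζ : ℝ) : ℂ) t :=
    dE.ofReal_comp
  have hτid : HasDerivAt (fun τ:ℝ => ((τ:ℝ):ℂ)) ((1:ℝ):ℂ) t := (hasDerivAt_id t).ofReal_comp
  have hw := (dEc.const_mul (y:ℂ)).const_sub (z:ℂ)
  have hc1 := (dEc.const_sub 1).const_mul (α * (y:ℂ) / (ζ:ℂ))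
  have hc2 := (hw.mul ((dEc.const_sub 1).fun_div (dEc.const_add 1) h1ne)).const_mul (α/(ζ:ℂ))
  have hc3 := (((hτid.sub (((dEc.const_sub 1).const_mul (2:ℂ)).div_const (ζ:ℂ))).add
      (((cpow _ _ 2 t dEc).const_sub 1).div_const (2*(ζ:ℂ)))).const_mul (1/(ζ:ℂ)^2)).sub
      ((cpow _ _ 3 t (dEc.const_sub 1)).div ((dEc.const_add 1).const_mul (2*(ζ:ℂ)^3)) h3ne)
  have hc3' := hc3.const_mul (α^2/2)
  have hc4 := ((cpow _ _ 2 t hw).const_mul (ζ:ℂ)).div ((cpow _ _ 2 t dEc).const_sub 1) hDne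
  have hc5 := ((((dE.fun_pow 2).const_sub 1).log hDneR).ofReal_comp).div_const (2:ℂ)
  have hpt : HasDerivAt (fun τ => Phi ζ α z τ y) _ t := (((hc1.add hc2).add hc3').sub hc4).sub hc5
  -- convert each component derivative to a clean form
  have hc1n : HasDerivAt (fun τ : ℝ => α * (y:ℂ) / (ζ:ℂ) * (1 - (Real.exp (-(ζ*τ)) : ℂ)))
      (α*(y:ℂ)*(Real.exp (-(ζ*t)) : ℂ)) t := by
    refine hc1.congr_deriv (Eq.symm ?_)
    push_cast
    field_simp
    try ring
  have hc2n : HasDerivAt (fun τ : ℝ => α / (ζ:ℂ) * (((z:ℂ) - (y:ℂ) * (Real.exp (-(ζ*τ)) : ℂ)) *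
      ((1 - (Real.exp (-(ζ*τ)) : ℂ))/(1 + (Real.exp (-(ζ*τ)) : ℂ)))))
      (α*(y:ℂ)*(Real.exp (-(ζ*t)) : ℂ)*((1 - (Real.exp (-(ζ*t)) : ℂ))^2/(1 - (Real.exp (-(ζ*t)) : ℂ)^2))
        + 2*α*(Real.exp (-(ζ*t)) : ℂ)*(1 - (Real.exp (-(ζ*t)) : ℂ))^2*((z:ℂ)-(y:ℂ)*(Real.exp (-(ζ*t)) : ℂ))
          /(1 - (Real.exp (-(ζ*t)) : ℂ)^2)^2) t := by
    refine hc2.congr_deriv (Eq.symm ?_)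
    push_cast
    obtain ⟨s, hs⟩ : ∃ s : ℂ, s = 1 + Complex.exp (-((ζ:ℂ)*(t:ℂ))) := ⟨_, rfl⟩
    have hsne : s ≠ 0 := by rw [hs]; exact hEc1
    obtain ⟨d, hd⟩ : ∃ d : ℂ, d = 1 - Complex.exp (-((ζ:ℂ)*(t:ℂ)))^2 := ⟨_, rfl⟩
    have hdne : d ≠ 0 := by rw [hd]; exact hEcD
    rw [← hs, ← hd]
    field_simp [hζ', hsne, hdne]
    try rw [eq_div_iff (by simp [hζ', hsne, hdne])]
    rw [hs, hd]
    ring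
  have hc3n : HasDerivAt (fun τ : ℝ => α^2/2 * ((1/(ζ:ℂ)^2) * ((τ:ℂ)
        - 2*(1 - (Real.exp (-(ζ*τ)) : ℂ))/(ζ:ℂ) + (1 - (Real.exp (-(ζ*τ)) : ℂ)^2)/(2*(ζ:ℂ)))
      - (1 - (Real.exp (-(ζ*τ)) : ℂ))^3/(2*(ζ:ℂ)^3*(1 + (Real.exp (-(ζ*τ)) : ℂ)))))
      (α^2*((1 - (Real.exp (-(ζ*t)) : ℂ))^2/(1 - (Real.exp (-(ζ*t)) : ℂ)^2))^2/(2*(ζ:ℂ)^2)) t := by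
    refine hc3'.congr_deriv (Eq.symm ?_)
    push_cast
    obtain ⟨s, hs⟩ : ∃ s : ℂ, s = 1 + Complex.exp (-((ζ:ℂ)*(t:ℂ))) := ⟨_, rfl⟩
    have hsne : s ≠ 0 := by rw [hs]; exact hEc1
    obtain ⟨d, hd⟩ : ∃ d : ℂ, d = 1 - Complex.exp (-((ζ:ℂ)*(t:ℂ)))^2 := ⟨_, rfl⟩
    have hdne : d ≠ 0 := by rw [hd]; exact hEcD
    rw [← hs, ← hd]
    field_simp [hζ', hsne, hdne]
    try rw [eq_div_iff (by simp [hζ', hsne, hdne])]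
    rw [hs, hd]
    ring
  have hc4n : HasDerivAt (fun τ : ℝ => (ζ:ℂ) * ((z:ℂ) - (y:ℂ)*(Real.exp (-(ζ*τ)) : ℂ))^2
        / (1 - (Real.exp (-(ζ*τ)) : ℂ)^2))
      (2*(ζ:ℂ)^2*(y:ℂ)*(Real.exp (-(ζ*t)) : ℂ)*((z:ℂ)-(y:ℂ)*(Real.exp (-(ζ*t)) : ℂ))
          /(1 - (Real.exp (-(ζ*t)) : ℂ)^2)
        - 2*(ζ:ℂ)^2*(Real.exp (-(ζ*t)) : ℂ)^2*((z:ℂ)-(y:ℂ)*(Real.exp (-(ζ*t)) : ℂ))^2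
          /(1 - (Real.exp (-(ζ*t)) : ℂ)^2)^2) t := by
    refine hc4.congr_deriv (Eq.symm ?_)
    push_cast
    obtain ⟨d, hd⟩ : ∃ d : ℂ, d = 1 - Complex.exp (-((ζ:ℂ)*(t:ℂ)))^2 := ⟨_, rfl⟩
    have hdne : d ≠ 0 := by rw [hd]; exact hEcD
    rw [← hd]
    field_simp [hζ', hdne]
    try rw [eq_div_iff (by simp [hζ', hdne])]
  have hc5n : HasDerivAt (fun τ : ℝ => (Real.log (1 - Real.exp (-(ζ*τ))^2) : ℂ)/2)
      ((ζ:ℂ)*(Real.exp (-(ζ*t)) : ℂ)^2/(1 - (Real.exp (-(ζ*t)) : ℂ)^2)) t := by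
    refine hc5.congr_deriv (Eq.symm ?_)
    push_cast
    obtain ⟨d, hd⟩ : ∃ d : ℂ, d = 1 - Complex.exp (-((ζ:ℂ)*(t:ℂ)))^2 := ⟨_, rfl⟩
    have hdne : d ≠ 0 := by rw [hd]; exact hEcD
    rw [← hd]
    field_simp [hζ', hdne]
    try rw [eq_div_iff (by simp [hζ', hdne])]
  have hptNice : HasDerivAt (fun τ => Phi ζ α z τ y) _ t :=
    (((hc1n.add hc2n).add hc3n).sub hc4n).sub hc5n
  have hev : (fun τ => p τ y z) =ᶠ[nhds t]
      (fun τ => ((Real.sqrt (ζ/Real.pi) : ℝ) : ℂ) * Complex.exp (Phi ζ α z τ y)) := by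
    filter_upwards [eventually_gt_nhds ht] with τ hτ
    exact hpΦ τ hτ y
  -- y-derivatives
  have hPy1 : ∀ v : ℝ, HasDerivAt (fun w : ℝ => Phi ζ α z t w)
      (α/(ζ:ℂ) * ((1 - (Real.exp (-(ζ*t)) : ℂ))^2/(1 - (Real.exp (-(ζ*t)) : ℂ)^2))
        + 2*(ζ:ℂ)*(Real.exp (-(ζ*t)) : ℂ)*((z:ℂ) - (v:ℂ)*(Real.exp (-(ζ*t)) : ℂ))
          /(1 - (Real.exp (-(ζ*t)) : ℂ)^2)) v := by
    intro v
    have hv : HasDerivAt (fun w:ℝ => ((w:ℝ):ℂ)) ((1:ℝ):ℂ) v := (hasDerivAt_id v).ofReal_comp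
    have h := (((((hv.const_mul α).div_const (ζ:ℂ)).mul_const (1 - (Real.exp (-(ζ*t)) : ℂ))).add
      ((((hv.mul_const ((Real.exp (-(ζ*t)) : ℂ))).const_sub (z:ℂ)).mul_const
        ((1 - (Real.exp (-(ζ*t)) : ℂ))/(1 + (Real.exp (-(ζ*t)) : ℂ)))).const_mul (α/(ζ:ℂ)))).add
      (hasDerivAt_const v (α^2/2 * ((1/(ζ:ℂ)^2) * ((t:ℂ) - 2*(1 - (Real.exp (-(ζ*t)) : ℂ))/(ζ:ℂ)
        + (1 - (Real.exp (-(ζ*t)) : ℂ)^2)/(2*(ζ:ℂ)))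
        - (1 - (Real.exp (-(ζ*t)) : ℂ))^3/(2*(ζ:ℂ)^3*(1 + (Real.exp (-(ζ*t)) : ℂ))))))).sub
      (((cpow _ _ 2 v ((hv.mul_const ((Real.exp (-(ζ*t)) : ℂ))).const_sub (z:ℂ))).const_mul
        (ζ:ℂ)).div_const (1 - (Real.exp (-(ζ*t)) : ℂ)^2)) |>.sub
      (hasDerivAt_const v ((Real.log (1 - Real.exp (-(ζ*t))^2) : ℂ)/2))
    have hfun : HasDerivAt (fun w : ℝ => Phi ζ α z t w) _ v := h
    refine hfun.congr_deriv (Eq.symm ?_)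
    push_cast
    field_simp [hζ', hEc1, hEcD]
    ring
  have hvy : HasDerivAt (fun w:ℝ => ((w:ℝ):ℂ)) ((1:ℝ):ℂ) y := (hasDerivAt_id y).ofReal_comp
  have haff := ((((hvy.mul_const ((Real.exp (-(ζ*t)) : ℂ))).const_sub (z:ℂ)).const_mul
      (2*(ζ:ℂ)*(Real.exp (-(ζ*t)) : ℂ))).div_const (1 - (Real.exp (-(ζ*t)) : ℂ)^2)).const_add
      (α/(ζ:ℂ) * ((1 - (Real.exp (-(ζ*t)) : ℂ))^2/(1 - (Real.exp (-(ζ*t)) : ℂ)^2)))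
  have hf1 := fun v : ℝ => ((hPy1 v).cexp).const_mul ((Real.sqrt (ζ/Real.pi) : ℝ) : ℂ)
  have hderiv1 : deriv (fun w : ℝ => ((Real.sqrt (ζ/Real.pi) : ℝ) : ℂ) *
      Complex.exp (Phi ζ α z t w)) = fun v : ℝ => ((Real.sqrt (ζ/Real.pi) : ℝ) : ℂ) *
      (Complex.exp (Phi ζ α z t v) *
        (α/(ζ:ℂ) * ((1 - (Real.exp (-(ζ*t)) : ℂ))^2/(1 - (Real.exp (-(ζ*t)) : ℂ)^2))
        + 2*(ζ:ℂ)*(Real.exp (-(ζ*t)) : ℂ)*((z:ℂ) - (v:ℂ)*(Real.exp (-(ζ*t)) : ℂ))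
          /(1 - (Real.exp (-(ζ*t)) : ℂ)^2))) := funext fun v => (hf1 v).deriv
  have hsecond := (((hPy1 y).cexp).fun_mul haff).const_mul ((Real.sqrt (ζ/Real.pi) : ℝ) : ℂ)
  have hfy : (fun v : ℝ => p t v z) = fun v : ℝ => ((Real.sqrt (ζ/Real.pi) : ℝ) : ℂ) *
      Complex.exp (Phi ζ α z t v) := funext fun v => hpΦ t ht v
  have hiter : iteratedDeriv 2 (fun v : ℝ => p t v z) y
      = deriv (deriv (fun v : ℝ => p t v z)) y := by
    rw [show (2:ℕ) = 1 + 1 from rfl, iteratedDeriv_succ, iteratedDeriv_one]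
  rw [hev.deriv_eq, ((hptNice.cexp).const_mul ((Real.sqrt (ζ/Real.pi) : ℝ) : ℂ)).deriv, hiter,
    hfy, (hf1 y).deriv, hderiv1, hsecond.deriv, hpΦ t ht y]
  push_cast
  obtain ⟨u, hu⟩ : ∃ u : ℂ, u = Complex.exp (-((ζ:ℂ)*(t:ℂ))) := ⟨_, rfl⟩
  rw [← hu]
  have hu1 : (1:ℂ) + u ≠ 0 := by rw [hu]; exact hEc1
  have hud : (1:ℂ) - u^2 ≠ 0 := by rw [hu]; exact hEcD
  have hkey : α*(y:ℂ)*u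
      + (α*(y:ℂ)*u*((1-u)^2/(1-u^2)) + 2*α*u*(1-u)^2*((z:ℂ)-(y:ℂ)*u)/(1-u^2)^2)
      + α^2*((1-u)^2/(1-u^2))^2/(2*(ζ:ℂ)^2)
      - (2*(ζ:ℂ)^2*(y:ℂ)*u*((z:ℂ)-(y:ℂ)*u)/(1-u^2)
          - 2*(ζ:ℂ)^2*u^2*((z:ℂ)-(y:ℂ)*u)^2/(1-u^2)^2)
      - (ζ:ℂ)*u^2/(1-u^2)
      = 1/2*((α/(ζ:ℂ)*((1-u)^2/(1-u^2)) + 2*(ζ:ℂ)*u*((z:ℂ)-(y:ℂ)*u)/(1-u^2))^2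
            + (-(2*(ζ:ℂ)*u^2)/(1-u^2)))
        - (ζ:ℂ)*(y:ℂ)*(α/(ζ:ℂ)*((1-u)^2/(1-u^2)) + 2*(ζ:ℂ)*u*((z:ℂ)-(y:ℂ)*u)/(1-u^2))
        + α*(y:ℂ) := by
    obtain ⟨d, hd⟩ : ∃ d : ℂ, d = 1 - u^2 := ⟨_, rfl⟩
    have hdne : d ≠ 0 := by rw [hd]; exact hud
    rw [← hd]
    field_simp [hζ', hdne]
    rw [hd]
    ring
  linear_combination (((Real.sqrt (ζ/Real.pi) : ℝ) : ℂ) * Complex.exp (Phi ζ α z t y)) * hkey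
end

section
/- Let ζ > 0, α ∈ ℂ, and let p(t,y,z) be as in Proposition 2.1: p(t,y,z) = exp( α (y/ζ)(1 - e^{-ζ t}) ) · exp( (α/ζ)(z - y e^{-ζ t}) tanh(ζ t / 2) ) · exp( α² σ²_ξ(t) / 2 ) · √(ζ/π) · exp( -ζ (z - y e^{-ζ t})² / (1 - e^{-2ζ t}) ) / √(1 - e^{-2ζ t}), where σ²_ξ(t) = (1/ζ²) ∫_0^t (1 - e^{-ζ(t-u)})² du − (1 - e^{-ζ t})³ / (2ζ³ (1 + e^{-ζ t})). Then for every bounded continuous f : ℝ → ℂ and every y ∈ ℝ, ∫_ℝ p(t,y,z) f(z) dz converges to f(y) as t → 0⁺. -/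
open MeasureTheory Filter Real Set Topology

private lemma sigma_tendsto (ζ : ℝ) (hζ : 0 < ζ) (σsqξ : ℝ → ℝ)
    (hσξ : ∀ t, σsqξ t =
      (1 / ζ ^ 2) * (∫ u in (0:ℝ)..t, (1 - Real.exp (-(ζ * (t - u)))) ^ 2)
        - (1 - Real.exp (-(ζ * t))) ^ 3 / (2 * ζ ^ 3 * (1 + Real.exp (-(ζ * t))))) :
    Tendsto σsqξ (nhdsWithin 0 (Set.Ioi 0)) (nhds 0) := by
  have hB : Tendsto (fun t : ℝ => (1 - Real.exp (-(ζ * t))) ^ 3 /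
      (2 * ζ ^ 3 * (1 + Real.exp (-(ζ * t))))) (nhdsWithin 0 (Set.Ioi 0)) (nhds 0) := by
    have hc : Continuous fun t : ℝ => (1 - Real.exp (-(ζ * t))) ^ 3 := by continuity
    have hd : Continuous fun t : ℝ => 2 * ζ ^ 3 * (1 + Real.exp (-(ζ * t))) := by continuity
    have h0 : (2 * ζ ^ 3 * (1 + Real.exp (-(ζ * (0:ℝ))))) ≠ 0 := by
      have := Real.exp_pos (-(ζ * (0:ℝ)))
      positivity
    have := (hc.tendsto 0).div (hd.tendsto 0) h0
    simp only [mul_zero, neg_zero, Real.exp_zero, sub_self] at this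
    have h := this.mono_left (nhdsWithin_le_nhds (s := Set.Ioi (0:ℝ)))
    simp only [ne_eq, OfNat.ofNat_ne_zero, not_false_eq_true, zero_pow, zero_div] at h
    exact h
  have hI : Tendsto (fun t : ℝ => (1 / ζ ^ 2) *
      (∫ u in (0:ℝ)..t, (1 - Real.exp (-(ζ * (t - u)))) ^ 2)) (nhdsWithin 0 (Set.Ioi 0)) (nhds 0) := by
    have hle : ∀ t ∈ Set.Ioi (0:ℝ),
        (1 / ζ ^ 2) * (∫ u in (0:ℝ)..t, (1 - Real.exp (-(ζ * (t - u)))) ^ 2) ≤ (1 / ζ ^ 2) * t := by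
      intro t ht
      have ht' : (0:ℝ) < t := ht
      have hint : IntervalIntegrable (fun u => (1 - Real.exp (-(ζ * (t - u)))) ^ 2)
          volume 0 t := by
        apply Continuous.intervalIntegrable; continuity
      have : (∫ u in (0:ℝ)..t, (1 - Real.exp (-(ζ * (t - u)))) ^ 2) ≤ ∫ u in (0:ℝ)..t, (1:ℝ) := by
        apply intervalIntegral.integral_mono_on ht'.le hint intervalIntegrable_const
        intro u hu
        have h1 : 0 ≤ ζ * (t - u) := mul_nonneg hζ.le (by simp at hu; linarith [hu.2])
        have h2 : Real.exp (-(ζ * (t - u))) ≤ 1 := Real.exp_le_one_iff.mpr (by linarith)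
        have h3 : 0 < Real.exp (-(ζ * (t - u))) := Real.exp_pos _
        nlinarith
      simp at this
      have h2 : (0:ℝ) < 1 / ζ ^ 2 := by positivity
      nlinarith
    have hge : ∀ t ∈ Set.Ioi (0:ℝ), (0:ℝ) ≤
        (1 / ζ ^ 2) * (∫ u in (0:ℝ)..t, (1 - Real.exp (-(ζ * (t - u)))) ^ 2) := by
      intro t ht
      have ht' : (0:ℝ) < t := ht
      have : (0:ℝ) ≤ ∫ u in (0:ℝ)..t, (1 - Real.exp (-(ζ * (t - u)))) ^ 2 :=
        intervalIntegral.integral_nonneg ht'.le (fun u _ => by positivity)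
      positivity
    have htop : Tendsto (fun t : ℝ => (1 / ζ ^ 2) * t) (nhdsWithin 0 (Set.Ioi 0)) (nhds 0) := by
      have hco : Continuous (fun t : ℝ => (1 / ζ ^ 2) * t) := continuous_const.mul continuous_id
      have := (hco.tendsto 0).mono_left (nhdsWithin_le_nhds (s := Set.Ioi (0:ℝ)))
      simpa using this
    refine tendsto_of_tendsto_of_tendsto_of_le_of_le' tendsto_const_nhds htop ?_ ?_
    · exact eventually_nhdsWithin_of_forall hge
    · exact eventually_nhdsWithin_of_forall hle
  have : σsqξ = fun t => (1 / ζ ^ 2) * (∫ u in (0:ℝ)..t, (1 - Real.exp (-(ζ * (t - u)))) ^ 2)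
      - (1 - Real.exp (-(ζ * t))) ^ 3 / (2 * ζ ^ 3 * (1 + Real.exp (-(ζ * t)))) := funext hσξ
  rw [this]
  simpa using hI.sub hB


private lemma tanh_cont : Continuous Real.tanh := by
  have he : Real.tanh = fun x => Real.sinh x / Real.cosh x :=
    funext fun x => Real.tanh_eq_sinh_div_cosh x
  rw [he]
  exact Real.continuous_sinh.div Real.continuous_cosh fun x => (Real.cosh_pos x).ne'

set_option maxHeartbeats 1000000 in
private lemma inner_tendsto (ζ : ℝ) (hζ : 0 < ζ) (α : ℂ) (f : ℝ → ℂ) (hf : Continuous f)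
    (M : ℝ) (hM : ∀ x, ‖f x‖ ≤ M) (y : ℝ) (ε : ℝ → ℝ) (hεc : Continuous ε) (hε0 : ε 0 = 0) :
    Tendsto (fun t : ℝ => ∫ v : ℝ,
      ((Real.exp (-v ^ 2) / Real.sqrt Real.pi : ℝ) : ℂ) *
        Complex.exp (α / (ζ : ℂ) * ((ε t * v * Real.tanh (ζ * t / 2) : ℝ) : ℂ)) *
        f (y * Real.exp (-(ζ * t)) + ε t * v))
      (nhdsWithin 0 (Set.Ioi 0)) (nhds (f y)) := by
  have hM0 : 0 ≤ M := le_trans (norm_nonneg _) (hM 0)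
  set l : Filter ℝ := nhdsWithin 0 (Set.Ioi 0) with hl
  have hεt : Tendsto ε l (nhds 0) := by
    have := (hεc.tendsto 0).mono_left (nhdsWithin_le_nhds (s := Set.Ioi (0:ℝ)))
    simpa [hε0] using this
  have hct : Tendsto (fun t => ε t * Real.tanh (ζ * t / 2)) l (nhds 0) := by
    have h2 : Tendsto (fun t : ℝ => Real.tanh (ζ * t / 2)) l (nhds (Real.tanh (ζ * 0 / 2))) :=
      ((tanh_cont.comp (by fun_prop)).tendsto 0).mono_left
        (nhdsWithin_le_nhds (s := Set.Ioi (0:ℝ)))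
    have := hεt.mul h2
    simpa using this
  have hexp1 : ∀ {g : ℝ → ℂ}, Tendsto g l (nhds 0) →
      Tendsto (fun t => Complex.exp (g t)) l (nhds 1) := by
    intro g hg
    have := (Complex.continuous_exp.tendsto 0).comp hg
    simpa [Function.comp_def] using this
  have hofReal : ∀ {g : ℝ → ℝ}, Tendsto g l (nhds 0) →
      Tendsto (fun t => ((g t : ℝ) : ℂ)) l (nhds 0) := by
    intro g hg
    have := (Complex.continuous_ofReal.tendsto 0).comp hg
    simpa [Function.comp_def] using this
  have hglim : (∫ v : ℝ, ((Real.exp (-v ^ 2) / Real.sqrt Real.pi : ℝ) : ℂ) * f y) = f y := by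
    rw [integral_mul_const]
    have h0 : (∫ v : ℝ, ((Real.exp (-v ^ 2) / Real.sqrt Real.pi : ℝ) : ℂ))
        = ((∫ v : ℝ, Real.exp (-v ^ 2) / Real.sqrt Real.pi : ℝ) : ℂ) := integral_ofReal
    rw [h0]
    have h1 : (∫ v : ℝ, Real.exp (-v ^ 2) / Real.sqrt Real.pi) = 1 := by
      rw [integral_div]
      have hg := integral_gaussian 1
      simp only [neg_mul, one_mul, div_one] at hg
      rw [hg, div_self (Real.sqrt_pos.mpr Real.pi_pos).ne']
    rw [h1]
    simp
  have hbound_int : Integrable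
      (fun v : ℝ => M / Real.sqrt Real.pi * Real.exp 1 * Real.exp (-(1/2 : ℝ) * v ^ 2)) := by
    exact (integrable_exp_neg_mul_sq (by norm_num : (0:ℝ) < 1/2)).const_mul _
  have hsmall : ∀ᶠ t in l, ‖α / (ζ : ℂ)‖ * |ε t * Real.tanh (ζ * t / 2)| ≤ 1 := by
    have h1 : Tendsto (fun t => ‖α / (ζ : ℂ)‖ * |ε t * Real.tanh (ζ * t / 2)|) l (nhds 0) := by
      have := tendsto_const_nhds (f := l) (x := ‖α / (ζ : ℂ)‖) |>.mul hct.abs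
      simpa using this
    exact h1.eventually (eventually_le_nhds one_pos)
  rw [← hglim]
  apply tendsto_integral_filter_of_dominated_convergence
    (bound := fun v : ℝ => M / Real.sqrt Real.pi * Real.exp 1 * Real.exp (-(1/2 : ℝ) * v ^ 2))
  · refine Filter.Eventually.of_forall (fun t => ?_)
    refine Continuous.aestronglyMeasurable ?_
    refine ((Complex.continuous_ofReal.comp (by fun_prop)).mul
      (Complex.continuous_exp.comp (continuous_const.mul
        (Complex.continuous_ofReal.comp (by fun_prop))))).mul (hf.comp (by fun_prop))
  · filter_upwards [hsmall] with t hts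
    refine Filter.Eventually.of_forall (fun v => ?_)
    rw [norm_mul, norm_mul]
    have hπ : 0 < Real.sqrt Real.pi := Real.sqrt_pos.mpr Real.pi_pos
    have hn1 : ‖((Real.exp (-v ^ 2) / Real.sqrt Real.pi : ℝ) : ℂ)‖
        = Real.exp (-v ^ 2) / Real.sqrt Real.pi := by
      rw [Complex.norm_real, Real.norm_eq_abs, abs_of_nonneg (by positivity)]
    have hn2 : ‖Complex.exp (α / (ζ : ℂ) *
        ((ε t * v * Real.tanh (ζ * t / 2) : ℝ) : ℂ))‖ ≤ Real.exp |v| := by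
      rw [Complex.norm_exp]
      apply Real.exp_le_exp.mpr
      calc (α / (ζ : ℂ) * ((ε t * v * Real.tanh (ζ * t / 2) : ℝ) : ℂ)).re
          ≤ ‖α / (ζ : ℂ) * ((ε t * v * Real.tanh (ζ * t / 2) : ℝ) : ℂ)‖ :=
            Complex.re_le_norm _
        _ = ‖α / (ζ : ℂ)‖ * |ε t * v * Real.tanh (ζ * t / 2)| := by
            rw [norm_mul, Complex.norm_real, Real.norm_eq_abs]
        _ = ‖α / (ζ : ℂ)‖ * |ε t * Real.tanh (ζ * t / 2)| * |v| := by
            rw [show ε t * v * Real.tanh (ζ * t / 2)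
              = ε t * Real.tanh (ζ * t / 2) * v by ring, abs_mul, mul_assoc]
        _ ≤ 1 * |v| := mul_le_mul_of_nonneg_right hts (abs_nonneg v)
        _ = |v| := one_mul _
    have hn3 : ‖f (y * Real.exp (-(ζ * t)) + ε t * v)‖ ≤ M := hM _
    rw [hn1]
    have hkey2 : Real.exp (-v ^ 2) * Real.exp |v| ≤
        Real.exp 1 * Real.exp (-(1/2 : ℝ) * v ^ 2) := by
      rw [← Real.exp_add, ← Real.exp_add]
      apply Real.exp_le_exp.mpr
      nlinarith [sq_nonneg (|v| - 1), sq_abs v]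
    calc Real.exp (-v ^ 2) / Real.sqrt Real.pi *
          ‖Complex.exp (α / (ζ : ℂ) * ((ε t * v * Real.tanh (ζ * t / 2) : ℝ) : ℂ))‖ *
          ‖f (y * Real.exp (-(ζ * t)) + ε t * v)‖
        ≤ Real.exp (-v ^ 2) / Real.sqrt Real.pi * Real.exp |v| * M := by
          apply mul_le_mul
          · exact mul_le_mul_of_nonneg_left hn2 (by positivity)
          · exact hn3
          · exact norm_nonneg _
          · positivity
      _ = (Real.exp (-v ^ 2) * Real.exp |v|) * (M / Real.sqrt Real.pi) := by ring
      _ ≤ (Real.exp 1 * Real.exp (-(1/2 : ℝ) * v ^ 2)) * (M / Real.sqrt Real.pi) :=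
          mul_le_mul_of_nonneg_right hkey2 (by positivity)
      _ = M / Real.sqrt Real.pi * Real.exp 1 * Real.exp (-(1/2 : ℝ) * v ^ 2) := by ring
  · exact hbound_int
  · refine Filter.Eventually.of_forall (fun v => ?_)
    have harg : Tendsto (fun t => α / (ζ : ℂ) *
        ((ε t * v * Real.tanh (ζ * t / 2) : ℝ) : ℂ)) l (nhds 0) := by
      have h1 : Tendsto (fun t => ε t * v * Real.tanh (ζ * t / 2)) l (nhds 0) := by
        have h := hct.mul_const v
        rw [zero_mul] at h
        refine h.congr fun t => ?_
        ring
      simpa using (hofReal h1).const_mul (α / (ζ : ℂ))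
    have hexp2 : Tendsto (fun t => Complex.exp (α / (ζ : ℂ) *
        ((ε t * v * Real.tanh (ζ * t / 2) : ℝ) : ℂ))) l (nhds 1) := hexp1 harg
    have hfc : Tendsto (fun t => f (y * Real.exp (-(ζ * t)) + ε t * v)) l (nhds (f y)) := by
      have hargc : Continuous fun t : ℝ => y * Real.exp (-(ζ * t)) + ε t * v :=
        (continuous_const.mul (by fun_prop)).add (hεc.mul continuous_const)
      have h2 : Tendsto (fun t : ℝ => y * Real.exp (-(ζ * t)) + ε t * v) l (nhds y) := by
        have := (hargc.tendsto 0).mono_left (nhdsWithin_le_nhds (s := Set.Ioi (0:ℝ)))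
        simpa [hε0] using this
      exact (hf.tendsto y).comp h2
    have := (tendsto_const_nhds (f := l)
      (x := ((Real.exp (-v ^ 2) / Real.sqrt Real.pi : ℝ) : ℂ))).mul hexp2 |>.mul hfc
    simpa using this


set_option maxHeartbeats 1000000 in
/-- Proposition 2.1, Dirac initial condition: the kernel of the
Ornstein–Uhlenbeck parabolic equation with linear potential satisfies
`∫ p(t,y,z) f(z) dz → f(y)` as `t → 0⁺` for every bounded continuous `f : ℝ → ℂ`. -/
theorem stmt_9 (ζ : ℝ) (hζ : 0 < ζ) (α : ℂ)
    (σsqξ : ℝ → ℝ)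
    (hσξ : ∀ t, σsqξ t =
      (1 / ζ ^ 2) * (∫ u in (0:ℝ)..t, (1 - Real.exp (-(ζ * (t - u)))) ^ 2)
        - (1 - Real.exp (-(ζ * t))) ^ 3 / (2 * ζ ^ 3 * (1 + Real.exp (-(ζ * t)))))
    (p : ℝ → ℝ → ℝ → ℂ)
    (hp : ∀ (t y z : ℝ), p t y z =
      Complex.exp (α * ((y / ζ * (1 - Real.exp (-(ζ * t)))) : ℝ)) *
        Complex.exp (α / (ζ : ℂ) *
          (((z - y * Real.exp (-(ζ * t))) * Real.tanh (ζ * t / 2)) : ℝ)) *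
        Complex.exp (α ^ 2 * (σsqξ t : ℝ) / 2) *
        ((Real.sqrt (ζ / Real.pi) *
          Real.exp (-(ζ * (z - y * Real.exp (-(ζ * t))) ^ 2 / (1 - Real.exp (-(2 * ζ * t)))))
            / Real.sqrt (1 - Real.exp (-(2 * ζ * t))) : ℝ) : ℂ))
    (f : ℝ → ℂ) (hf : Continuous f) (hfb : ∃ M : ℝ, ∀ x, ‖f x‖ ≤ M) (y : ℝ) :
    Filter.Tendsto (fun t : ℝ => ∫ z : ℝ, p t y z * f z)
      (nhdsWithin 0 (Set.Ioi 0)) (nhds (f y)) := by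
  obtain ⟨M, hM⟩ := hfb
  have hM0 : 0 ≤ M := le_trans (norm_nonneg _) (hM 0)
  set l : Filter ℝ := nhdsWithin 0 (Set.Ioi 0) with hl
  set ε : ℝ → ℝ := fun t => Real.sqrt ((1 - Real.exp (-(2 * ζ * t))) / ζ) with hεdef
  set A : ℝ → ℂ := fun t =>
    Complex.exp (α * ((y / ζ * (1 - Real.exp (-(ζ * t)))) : ℝ)) *
      Complex.exp (α ^ 2 * (σsqξ t : ℝ) / 2) with hAdef
  set F : ℝ → ℝ → ℂ := fun t v =>
    ((Real.exp (-v ^ 2) / Real.sqrt Real.pi : ℝ) : ℂ) *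
      Complex.exp (α / (ζ : ℂ) * ((ε t * v * Real.tanh (ζ * t / 2) : ℝ) : ℂ)) *
      f (y * Real.exp (-(ζ * t)) + ε t * v) with hFdef
  -- basic positivity facts for t > 0
  have hspos : ∀ t ∈ Set.Ioi (0:ℝ), 0 < 1 - Real.exp (-(2 * ζ * t)) := by
    intro t ht
    have ht' : (0:ℝ) < t := ht
    have : Real.exp (-(2 * ζ * t)) < 1 := by
      rw [Real.exp_lt_one_iff]
      nlinarith
    linarith
  have hεpos : ∀ t ∈ Set.Ioi (0:ℝ), 0 < ε t := by
    intro t ht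
    exact Real.sqrt_pos.mpr (div_pos (hspos t ht) hζ)
  -- Step 1: key change-of-variables identity
  have hkey : ∀ t ∈ Set.Ioi (0:ℝ),
      (∫ z : ℝ, p t y z * f z) = A t * ∫ v : ℝ, F t v := by
    intro t ht
    have hs := hspos t ht
    have hε := hεpos t ht
    set m : ℝ := y * Real.exp (-(ζ * t)) with hm
    set s : ℝ := 1 - Real.exp (-(2 * ζ * t)) with hsdef
    set H : ℝ → ℂ := fun z =>
      Complex.exp (α / (ζ : ℂ) * (((z - m) * Real.tanh (ζ * t / 2) : ℝ) : ℂ)) *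
        ((Real.sqrt (ζ / Real.pi) *
          Real.exp (-(ζ * (z - m) ^ 2 / s)) / Real.sqrt s : ℝ) : ℂ) * f z with hHdef
    have step1 : (fun z : ℝ => p t y z * f z) = fun z => A t * H z := by
      funext z
      rw [hp, hHdef, hAdef]
      ring
    have step2 : (∫ v : ℝ, H (m + ε t * v)) = |(ε t)⁻¹| • ∫ z : ℝ, H z := by
      have h1 := MeasureTheory.Measure.integral_comp_mul_left
        (fun x : ℝ => H (m + x)) (ε t)
      have h2 := MeasureTheory.integral_add_left_eq_self (μ := volume) H m
      simpa [h2] using h1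
    have step3 : (∫ z : ℝ, H z) = (ε t : ℂ) * ∫ v : ℝ, H (m + ε t * v) := by
      rw [step2, abs_of_pos (inv_pos.mpr hε), Complex.real_smul, ← mul_assoc,
        ← Complex.ofReal_mul, mul_inv_cancel₀ hε.ne', Complex.ofReal_one, one_mul]
    have step4 : (fun v : ℝ => (ε t : ℂ) * H (m + ε t * v)) = F t := by
      funext v
      rw [hHdef, hFdef]
      beta_reduce
      have e1 : m + ε t * v - m = ε t * v := by ring
      rw [e1]
      have hε2 : ζ * ε t ^ 2 = s := by
        rw [hεdef]
        rw [Real.sq_sqrt (by positivity)]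
        field_simp
        rw [hsdef]; ring_nf
      have e2 : ζ * (ε t * v) ^ 2 / s = v ^ 2 := by
        rw [div_eq_iff hs.ne']
        nlinarith [hε2]
      rw [e2]
      have e3 : ((Real.exp (-v ^ 2) / Real.sqrt Real.pi : ℝ) : ℂ) =
          (ε t : ℂ) * ((Real.sqrt (ζ / Real.pi) *
            Real.exp (-v ^ 2) / Real.sqrt s : ℝ) : ℂ) := by
        have h4 : ε t * (Real.sqrt (ζ / Real.pi) * Real.exp (-v ^ 2) / Real.sqrt s)
            = Real.exp (-v ^ 2) / Real.sqrt Real.pi := by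
          have hεs : ε t = Real.sqrt s / Real.sqrt ζ := by
            rw [hεdef]
            beta_reduce
            rw [← hsdef, Real.sqrt_div hs.le]
          rw [hεs, Real.sqrt_div hζ.le]
          have hsζ : Real.sqrt ζ ≠ 0 := (Real.sqrt_pos.mpr hζ).ne'
          have hss : Real.sqrt s ≠ 0 := (Real.sqrt_pos.mpr hs).ne'
          have hsπ : Real.sqrt Real.pi ≠ 0 := (Real.sqrt_pos.mpr Real.pi_pos).ne'
          field_simp
        rw [← h4]
        push_cast
        ring
      rw [e3]
      ring
    calc (∫ z : ℝ, p t y z * f z) = ∫ z : ℝ, A t * H z := by rw [step1]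
      _ = A t * ∫ z : ℝ, H z := integral_const_mul _ _
      _ = A t * ((ε t : ℂ) * ∫ v : ℝ, H (m + ε t * v)) := by rw [step3]
      _ = A t * ∫ v : ℝ, (ε t : ℂ) * H (m + ε t * v) := by rw [integral_const_mul]
      _ = A t * ∫ v : ℝ, F t v := by rw [step4]
  have hεc : Continuous ε := by
    rw [hεdef]
    exact Real.continuous_sqrt.comp ((continuous_const.sub
      (Real.continuous_exp.comp (by fun_prop))).div_const ζ)
  have hε0 : ε 0 = 0 := by simp [hεdef]
  have hexp1 : ∀ {g : ℝ → ℂ}, Tendsto g l (nhds 0) →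
      Tendsto (fun t => Complex.exp (g t)) l (nhds 1) := by
    intro g hg
    have := (Complex.continuous_exp.tendsto 0).comp hg
    simpa [Function.comp_def] using this
  have hofReal : ∀ {g : ℝ → ℝ}, Tendsto g l (nhds 0) →
      Tendsto (fun t => ((g t : ℝ) : ℂ)) l (nhds 0) := by
    intro g hg
    have := (Complex.continuous_ofReal.tendsto 0).comp hg
    simpa [Function.comp_def] using this
  have hσt : Tendsto σsqξ l (nhds 0) := sigma_tendsto ζ hζ σsqξ hσξ
  have hA1 : Tendsto A l (nhds 1) := by
    have h1 : Tendsto (fun t : ℝ => (y / ζ * (1 - Real.exp (-(ζ * t))) : ℝ)) l (nhds 0) := by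
      have hc : Continuous fun t : ℝ => (y / ζ * (1 - Real.exp (-(ζ * t)))) := by fun_prop
      have := (hc.tendsto 0).mono_left (nhdsWithin_le_nhds (s := Set.Ioi (0:ℝ)))
      simpa using this
    have e1 : Tendsto (fun t => Complex.exp (α * ((y / ζ * (1 - Real.exp (-(ζ * t))) : ℝ) : ℂ)))
        l (nhds 1) := hexp1 (by simpa using (hofReal h1).const_mul α)
    have e2 : Tendsto (fun t => Complex.exp (α ^ 2 * ((σsqξ t : ℝ) : ℂ) / 2)) l (nhds 1) := by
      refine hexp1 ?_
      have := ((hofReal hσt).const_mul (α ^ 2)).div_const 2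
      simpa using this
    have := e1.mul e2
    rw [hAdef]
    simpa using this
  have hDC : Tendsto (fun t => ∫ v : ℝ, F t v) l (nhds (f y)) := by
    rw [hFdef]
    exact inner_tendsto ζ hζ α f hf M hM y ε hεc hε0
  have hfinal := hA1.mul hDC
  rw [one_mul] at hfinal
  exact hfinal.congr' (eventuallyEq_of_mem self_mem_nhdsWithin
    (fun t ht => (hkey t ht).symm))
end

section
/- Let ζ > 0. Define σ²_ξ(t) = (1/ζ²) ∫_0^t (1 - e^{-ζ(t-u)})² du − (1 - e^{-ζ t})³ / (2ζ³ (1 + e^{-ζ t})), and for t > 0, x, x', y, y' ∈ ℝ define p(t,x,y,x',y') = (1/(√(2π) σ_ξ(t))) · exp( -( x - x' - (y/ζ)(1 - e^{-ζ t}) - (1/ζ)(y' - y e^{-ζ t}) tanh(ζ t / 2) )² / (2 σ²_ξ(t)) ) · √(ζ/π) · exp( -ζ (y' - y e^{-ζ t})² / (1 - e^{-2ζ t}) ) / √(1 - e^{-2ζ t}). Then for every fixed (x',y') ∈ ℝ², the function (t,x,y) ↦ p(t,x,y,x',y') satisfies the Ornstein–Uhlenbeck Kolmogorov hypoelliptic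 equation ∂_t p = (1/2) ∂²_y p − ζ y ∂_y p − y ∂_x p for all t > 0 and (x,y) ∈ ℝ². -/
open Real

lemma tanh_formula (a : ℝ) :
    Real.tanh (a / 2) = (1 - Real.exp (-a)) / (1 + Real.exp (-a)) := by
  have hw : Real.exp (-a) = Real.exp (-(a/2)) ^ 2 := by
    rw [sq, ← Real.exp_add]; ring_nf
  have hiv : Real.exp (a/2) = (Real.exp (-(a/2)))⁻¹ := by
    rw [← Real.exp_neg]; ring_nf
  have hwpos : (0:ℝ) < Real.exp (-(a/2)) := Real.exp_pos _
  have h2 : (0:ℝ) < 1 + Real.exp (-(a/2))^2 := by positivity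
  rw [Real.tanh_eq_sinh_div_cosh, Real.sinh_eq, Real.cosh_eq, hw, hiv]
  rw [div_eq_div_iff (by positivity) (by positivity)]
  field_simp

lemma integ (ζ : ℝ) (hζ : ζ ≠ 0) (t : ℝ) :
    (∫ u in (0:ℝ)..t, (1 - Real.exp (-(ζ * (t - u)))) ^ 2)
      = t - 2*(1 - Real.exp (-(ζ*t)))/ζ + (1 - Real.exp (-(2*ζ*t)))/(2*ζ) := by
  have hderiv : ∀ u ∈ Set.uIcc (0:ℝ) t,
      HasDerivAt (fun u : ℝ => u - 2/ζ * Real.exp (-(ζ*(t-u))) + 1/(2*ζ) * Real.exp (-(2*ζ*(t-u))))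
        ((1 - Real.exp (-(ζ * (t - u)))) ^ 2) u := by
    intro u _
    have h1 : HasDerivAt (fun u : ℝ => -(ζ*(t-u))) ζ u := by
      have : HasDerivAt (fun u : ℝ => t - u) (-1) u := (hasDerivAt_id u).const_sub t
      have h := (this.const_mul ζ).neg; simp only [mul_neg, mul_one, neg_neg] at h; exact h
    have h2 : HasDerivAt (fun u : ℝ => -(2*ζ*(t-u))) (2*ζ) u := by
      have : HasDerivAt (fun u : ℝ => t - u) (-1) u := (hasDerivAt_id u).const_sub t
      have h := (this.const_mul (2*ζ)).neg; simp only [mul_neg, mul_one, neg_neg] at h; exact h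
    have H := ((hasDerivAt_id u).sub ((h1.exp).const_mul (2/ζ))).add ((h2.exp).const_mul (1/(2*ζ)))
    refine H.congr_deriv ?_
    have he2 : Real.exp (-(2*ζ*(t-u))) = Real.exp (-(ζ*(t-u)))^2 := by
      rw [sq, ← Real.exp_add]; ring_nf
    rw [he2]; field_simp; ring
  have hcont : IntervalIntegrable (fun u : ℝ => (1 - Real.exp (-(ζ * (t - u)))) ^ 2)
      MeasureTheory.volume 0 t := by
    apply Continuous.intervalIntegrable
    continuity
  rw [intervalIntegral.integral_eq_sub_of_hasDerivAt hderiv hcont]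
  simp only [sub_self, mul_zero, neg_zero, Real.exp_zero, sub_zero, mul_zero]
  ring_nf

lemma key_pos {a : ℝ} (ha : 0 < a) :
    2 * (1 - Real.exp (-a)) < a * (1 + Real.exp (-a)) := by
  set f : ℝ → ℝ := fun x => x * (1 + Real.exp (-x)) - 2 * (1 - Real.exp (-x)) with hf
  have hder : ∀ x : ℝ, HasDerivAt f (1 - Real.exp (-x) - x * Real.exp (-x)) x := by
    intro x
    have he : HasDerivAt (fun x : ℝ => Real.exp (-x)) (-Real.exp (-x)) x := by
      have h := (Real.hasDerivAt_exp (-x)).comp x ((hasDerivAt_id x).neg); simp at h; exact h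
    have H := ((hasDerivAt_id x).mul (he.const_add 1)).sub ((he.const_sub 1).const_mul 2)
    refine H.congr_deriv ?_; simp only [id_eq]; ring
  have hmono : StrictMonoOn f (Set.Ici (0:ℝ)) := by
    apply strictMonoOn_of_deriv_pos (convex_Ici 0)
    · apply Continuous.continuousOn; fun_prop
    · intro x hx
      rw [interior_Ici] at hx
      rw [(hder x).deriv]
      have h1 : x + 1 < Real.exp x := Real.add_one_lt_exp (ne_of_gt hx)
      have h2 : Real.exp (-x) = (Real.exp x)⁻¹ := Real.exp_neg x
      have h3 : (0:ℝ) < Real.exp x := Real.exp_pos x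
      rw [h2]
      have h4 : (1 + x) * (Real.exp x)⁻¹ < 1 := by
        rw [mul_inv_lt_iff₀' h3]; linarith
      nlinarith [h4]
  have h0 : f 0 = 0 := by simp [hf]
  have := hmono (Set.self_mem_Ici) (Set.mem_Ici.mpr ha.le) ha
  rw [h0] at this
  simpa [hf, sub_pos] using this

noncomputable def Sfn (ζ τ : ℝ) : ℝ :=
  τ / ζ ^ 2 - 2 / ζ ^ 3 * ((1 - Real.exp (-(ζ * τ))) / (1 + Real.exp (-(ζ * τ))))

noncomputable def ker (ζ x' y' t x y : ℝ) : ℝ :=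
  1 / (Real.sqrt (2 * Real.pi) * Real.sqrt (Sfn ζ t)) *
    Real.exp (-(x - x' - y / ζ * (1 - Real.exp (-(ζ * t)))
        - 1 / ζ * (y' - y * Real.exp (-(ζ * t))) *
          ((1 - Real.exp (-(ζ * t))) / (1 + Real.exp (-(ζ * t))))) ^ 2
      / (2 * Sfn ζ t)) *
    (Real.sqrt (ζ / Real.pi) *
      Real.exp (-(ζ * (y' - y * Real.exp (-(ζ * t))) ^ 2 / (1 - Real.exp (-(ζ * t)) ^ 2)))
        / Real.sqrt (1 - Real.exp (-(ζ * t)) ^ 2))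

lemma Sfn_pos {ζ t : ℝ} (hζ : 0 < ζ) (ht : 0 < t) : 0 < Sfn ζ t := by
  have key := key_pos (mul_pos hζ ht)
  have h1E : (0:ℝ) < 1 + Real.exp (-(ζ*t)) := by positivity
  have hrw : Sfn ζ t =
      (ζ*t*(1 + Real.exp (-(ζ*t))) - 2*(1 - Real.exp (-(ζ*t))))/(ζ^3*(1 + Real.exp (-(ζ*t)))) := by
    unfold Sfn; field_simp
  rw [hrw]
  apply div_pos (by linarith) (by positivity)

lemma exp_lt_one' {ζ t : ℝ} (hζ : 0 < ζ) (ht : 0 < t) : Real.exp (-(ζ * t)) < 1 := by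
  have h : -(ζ*t) < 0 := by nlinarith
  calc Real.exp (-(ζ*t)) < Real.exp 0 := Real.exp_lt_exp.mpr h
    _ = 1 := Real.exp_zero

set_option maxHeartbeats 1000000 in
lemma ker_x (ζ x' y' t x y : ℝ) (hζ : 0 < ζ) (ht : 0 < t) :
    HasDerivAt (fun u => ker ζ x' y' t u y)
      ((-((x - x' - y / ζ * (1 - Real.exp (-(ζ * t))) - 1 / ζ * (y' - y * Real.exp (-(ζ * t))) * ((1 - Real.exp (-(ζ * t))) / (1 + Real.exp (-(ζ * t))))) / Sfn ζ t)) * ker ζ x' y' t x y) x := by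
  have hspos : 0 < Sfn ζ t := Sfn_pos hζ ht
  have hs : Sfn ζ t ≠ 0 := ne_of_gt hspos
  have hE1 : Real.exp (-(ζ * t)) < 1 := exp_lt_one' hζ ht
  have hEpos : (0:ℝ) < Real.exp (-(ζ * t)) := Real.exp_pos _
  have hDpos : (0:ℝ) < 1 - Real.exp (-(ζ * t)) ^ 2 := by nlinarith
  have hD : (1:ℝ) - Real.exp (-(ζ * t)) ^ 2 ≠ 0 := ne_of_gt hDpos
  have h1Epos : (0:ℝ) < 1 + Real.exp (-(ζ * t)) := by positivity
  have h1E : (1:ℝ) + Real.exp (-(ζ * t)) ≠ 0 := ne_of_gt h1Epos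
  have hζ' : ζ ≠ 0 := ne_of_gt hζ
  unfold ker
  have hL : HasDerivAt (fun u : ℝ => u - x' - y / ζ * (1 - Real.exp (-(ζ * t)))
      - 1 / ζ * (y' - y * Real.exp (-(ζ * t))) * ((1 - Real.exp (-(ζ * t))) / (1 + Real.exp (-(ζ * t))))) 1 x :=
    (((hasDerivAt_id' x).sub_const _).sub_const _).sub_const _
  have H := ((((hL.pow 2).neg.div_const (2 * Sfn ζ t)).exp.const_mul
      (1 / (Real.sqrt (2 * Real.pi) * Real.sqrt (Sfn ζ t)))).mul_const
      (Real.sqrt (ζ / Real.pi) * Real.exp (-(ζ * (y' - y * Real.exp (-(ζ * t))) ^ 2 / (1 - Real.exp (-(ζ * t)) ^ 2))) / Real.sqrt (1 - Real.exp (-(ζ * t)) ^ 2)))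
  refine H.congr_deriv ?_
  norm_num
  ring

set_option maxHeartbeats 1000000 in
lemma ker_y (ζ x' y' t x : ℝ) (hζ : 0 < ζ) (ht : 0 < t) (v : ℝ) :
    HasDerivAt (fun w => ker ζ x' y' t x w)
      (((x - x' - v / ζ * (1 - Real.exp (-(ζ * t))) - 1 / ζ * (y' - v * Real.exp (-(ζ * t))) * ((1 - Real.exp (-(ζ * t))) / (1 + Real.exp (-(ζ * t))))) * ((1 - Real.exp (-(ζ * t))) / (1 + Real.exp (-(ζ * t)))) / (ζ * Sfn ζ t) + 2 * ζ * Real.exp (-(ζ * t)) * (y' - v * Real.exp (-(ζ * t))) / (1 - Real.exp (-(ζ * t)) ^ 2)) * ker ζ x' y' t x v) v := by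
  have hspos : 0 < Sfn ζ t := Sfn_pos hζ ht
  have hs : Sfn ζ t ≠ 0 := ne_of_gt hspos
  have hE1 : Real.exp (-(ζ * t)) < 1 := exp_lt_one' hζ ht
  have hEpos : (0:ℝ) < Real.exp (-(ζ * t)) := Real.exp_pos _
  have hDpos : (0:ℝ) < 1 - Real.exp (-(ζ * t)) ^ 2 := by nlinarith
  have hD : (1:ℝ) - Real.exp (-(ζ * t)) ^ 2 ≠ 0 := ne_of_gt hDpos
  have h1Epos : (0:ℝ) < 1 + Real.exp (-(ζ * t)) := by positivity
  have h1E : (1:ℝ) + Real.exp (-(ζ * t)) ≠ 0 := ne_of_gt h1Epos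
  have hζ' : ζ ≠ 0 := ne_of_gt hζ
  unfold ker
  have hg : HasDerivAt (fun w : ℝ => y' - w * Real.exp (-(ζ * t))) (-(1 * Real.exp (-(ζ * t)))) v :=
    ((hasDerivAt_id' v).mul_const _).const_sub y'
  have hL : HasDerivAt (fun w : ℝ => x - x' - w / ζ * (1 - Real.exp (-(ζ * t)))
      - 1 / ζ * (y' - w * Real.exp (-(ζ * t))) * ((1 - Real.exp (-(ζ * t))) / (1 + Real.exp (-(ζ * t)))))
      (-(((1 - Real.exp (-(ζ * t))) / (1 + Real.exp (-(ζ * t)))) / ζ)) v := by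
    have H := ((((hasDerivAt_id' v).div_const ζ).mul_const (1 - Real.exp (-(ζ * t)))).const_sub (x - x')).sub
      ((hg.const_mul (1/ζ)).mul_const ((1 - Real.exp (-(ζ * t))) / (1 + Real.exp (-(ζ * t)))))
    refine H.congr_deriv ?_
    field_simp
    ring
  have H := (((hL.pow 2).neg.div_const (2 * Sfn ζ t)).exp.const_mul
      (1 / (Real.sqrt (2 * Real.pi) * Real.sqrt (Sfn ζ t)))).mul
      (((((hg.pow 2).const_mul ζ).div_const (1 - Real.exp (-(ζ * t)) ^ 2)).neg.exp.const_mul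
        (Real.sqrt (ζ / Real.pi))).div_const (Real.sqrt (1 - Real.exp (-(ζ * t)) ^ 2)))
  refine H.congr_deriv ?_
  norm_num
  ring

set_option maxHeartbeats 1000000 in
lemma ker_yy (ζ x' y' t x y : ℝ) (hζ : 0 < ζ) (ht : 0 < t) :
    HasDerivAt (fun v => ((x - x' - v / ζ * (1 - Real.exp (-(ζ * t))) - 1 / ζ * (y' - v * Real.exp (-(ζ * t))) * ((1 - Real.exp (-(ζ * t))) / (1 + Real.exp (-(ζ * t))))) * ((1 - Real.exp (-(ζ * t))) / (1 + Real.exp (-(ζ * t)))) / (ζ * Sfn ζ t) + 2 * ζ * Real.exp (-(ζ * t)) * (y' - v * Real.exp (-(ζ * t))) / (1 - Real.exp (-(ζ * t)) ^ 2)) * ker ζ x' y' t x v)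
      ((((-(((1 - Real.exp (-(ζ * t))) / (1 + Real.exp (-(ζ * t)))) * ((1 - Real.exp (-(ζ * t))) / (1 + Real.exp (-(ζ * t)))) / (ζ ^ 2 * Sfn ζ t)) - 2 * ζ * Real.exp (-(ζ * t)) ^ 2 / (1 - Real.exp (-(ζ * t)) ^ 2)) + ((x - x' - y / ζ * (1 - Real.exp (-(ζ * t))) - 1 / ζ * (y' - y * Real.exp (-(ζ * t))) * ((1 - Real.exp (-(ζ * t))) / (1 + Real.exp (-(ζ * t))))) * ((1 - Real.exp (-(ζ * t))) / (1 + Real.exp (-(ζ * t)))) / (ζ * Sfn ζ t) + 2 * ζ * Real.exp (-(ζ * t)) * (y' - y * Real.exp (-(ζ * t))) / (1 - Real.exp (-(ζ * t)) ^ 2)) * ((x - x' - y / ζ * (1 - Real.exp (-(ζ * t))) - 1 / ζ * (y' - y * Real.exp (-(ζ * t))) * ((1 - Real.exp (-(ζ * t))) / (1 + Real.exp (-(ζ * t))))) * ((1 - Real.exp (-(ζ * t))) / (1 + Real.exp (-(ζ * t)))) / (ζ * Sfn ζ t) + 2 * ζ * Real.exp (-(ζ * t)) * (y' - y * Real.exp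 (-(ζ * t))) / (1 - Real.exp (-(ζ * t)) ^ 2)))) * ker ζ x' y' t x y) y := by
  have hspos : 0 < Sfn ζ t := Sfn_pos hζ ht
  have hs : Sfn ζ t ≠ 0 := ne_of_gt hspos
  have hE1 : Real.exp (-(ζ * t)) < 1 := exp_lt_one' hζ ht
  have hEpos : (0:ℝ) < Real.exp (-(ζ * t)) := Real.exp_pos _
  have hDpos : (0:ℝ) < 1 - Real.exp (-(ζ * t)) ^ 2 := by nlinarith
  have hD : (1:ℝ) - Real.exp (-(ζ * t)) ^ 2 ≠ 0 := ne_of_gt hDpos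
  have h1Epos : (0:ℝ) < 1 + Real.exp (-(ζ * t)) := by positivity
  have h1E : (1:ℝ) + Real.exp (-(ζ * t)) ≠ 0 := ne_of_gt h1Epos
  have hζ' : ζ ≠ 0 := ne_of_gt hζ
  have hg : HasDerivAt (fun v : ℝ => y' - v * Real.exp (-(ζ * t))) (-(1 * Real.exp (-(ζ * t)))) y :=
    ((hasDerivAt_id' y).mul_const _).const_sub y'
  have hL : HasDerivAt (fun v : ℝ => x - x' - v / ζ * (1 - Real.exp (-(ζ * t)))
      - 1 / ζ * (y' - v * Real.exp (-(ζ * t))) * ((1 - Real.exp (-(ζ * t))) / (1 + Real.exp (-(ζ * t)))))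
      (-(((1 - Real.exp (-(ζ * t))) / (1 + Real.exp (-(ζ * t)))) / ζ)) y := by
    have H := ((((hasDerivAt_id' y).div_const ζ).mul_const (1 - Real.exp (-(ζ * t)))).const_sub (x - x')).sub
      ((hg.const_mul (1/ζ)).mul_const ((1 - Real.exp (-(ζ * t))) / (1 + Real.exp (-(ζ * t)))))
    refine H.congr_deriv ?_
    field_simp
    ring
  have hB : HasDerivAt (fun v : ℝ => ((x - x' - v / ζ * (1 - Real.exp (-(ζ * t))) - 1 / ζ * (y' - v * Real.exp (-(ζ * t))) * ((1 - Real.exp (-(ζ * t))) / (1 + Real.exp (-(ζ * t))))) * ((1 - Real.exp (-(ζ * t))) / (1 + Real.exp (-(ζ * t)))) / (ζ * Sfn ζ t) + 2 * ζ * Real.exp (-(ζ * t)) * (y' - v * Real.exp (-(ζ * t))) / (1 - Real.exp (-(ζ * t)) ^ 2)))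
      ((-(((1 - Real.exp (-(ζ * t))) / (1 + Real.exp (-(ζ * t)))) * ((1 - Real.exp (-(ζ * t))) / (1 + Real.exp (-(ζ * t)))) / (ζ ^ 2 * Sfn ζ t)) - 2 * ζ * Real.exp (-(ζ * t)) ^ 2 / (1 - Real.exp (-(ζ * t)) ^ 2))) y := by
    have H := ((hL.mul_const ((1 - Real.exp (-(ζ * t))) / (1 + Real.exp (-(ζ * t))))).div_const (ζ * Sfn ζ t)).add
      ((hg.const_mul (2 * ζ * Real.exp (-(ζ * t)))).div_const (1 - Real.exp (-(ζ * t)) ^ 2))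
    refine H.congr_deriv ?_
    field_simp
    ring
  have H := hB.mul (ker_y ζ x' y' t x hζ ht y)
  refine H.congr_deriv ?_
  ring

set_option maxHeartbeats 1000000 in
lemma ker_t (ζ x' y' t x y : ℝ) (hζ : 0 < ζ) (ht : 0 < t) :
    HasDerivAt (fun τ => ker ζ x' y' τ x y)
      (((x - x' - y / ζ * (1 - Real.exp (-(ζ * t))) - 1 / ζ * (y' - y * Real.exp (-(ζ * t))) * ((1 - Real.exp (-(ζ * t))) / (1 + Real.exp (-(ζ * t))))) * (y * Real.exp (-(ζ * t)) * (1 + ((1 - Real.exp (-(ζ * t))) / (1 + Real.exp (-(ζ * t))))) + 2 * Real.exp (-(ζ * t)) * (y' - y * Real.exp (-(ζ * t))) / (1 + Real.exp (-(ζ * t))) ^ 2) / Sfn ζ t + (x - x' - y / ζ * (1 - Real.exp (-(ζ * t))) - 1 / ζ * (y' - y * Real.exp (-(ζ * t))) * ((1 - Real.exp (-(ζ * t))) / (1 + Real.exp (-(ζ * t))))) ^ 2 * ((1 - Real.exp (-(ζ * t))) ^ 2 / (ζ ^ 2 * (1 + Real.exp (-(ζ * t))) ^ 2)) / (2 * Sfn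 ζ t ^ 2) - (2 * ζ ^ 2 * y * Real.exp (-(ζ * t)) * (y' - y * Real.exp (-(ζ * t))) * (1 - Real.exp (-(ζ * t)) ^ 2) - 2 * ζ ^ 2 * Real.exp (-(ζ * t)) ^ 2 * (y' - y * Real.exp (-(ζ * t))) ^ 2) / (1 - Real.exp (-(ζ * t)) ^ 2) ^ 2 - ((1 - Real.exp (-(ζ * t))) ^ 2 / (ζ ^ 2 * (1 + Real.exp (-(ζ * t))) ^ 2)) / (2 * Sfn ζ t) - ζ * Real.exp (-(ζ * t)) ^ 2 / (1 - Real.exp (-(ζ * t)) ^ 2)) * ker ζ x' y' t x y) t := by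
  have hspos : 0 < Sfn ζ t := Sfn_pos hζ ht
  have hs : Sfn ζ t ≠ 0 := ne_of_gt hspos
  have hE1 : Real.exp (-(ζ * t)) < 1 := exp_lt_one' hζ ht
  have hEpos : (0:ℝ) < Real.exp (-(ζ * t)) := Real.exp_pos _
  have hDpos : (0:ℝ) < 1 - Real.exp (-(ζ * t)) ^ 2 := by nlinarith
  have hD : (1:ℝ) - Real.exp (-(ζ * t)) ^ 2 ≠ 0 := ne_of_gt hDpos
  have h1Epos : (0:ℝ) < 1 + Real.exp (-(ζ * t)) := by positivity
  have h1E : (1:ℝ) + Real.exp (-(ζ * t)) ≠ 0 := ne_of_gt h1Epos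
  have hζ' : ζ ≠ 0 := ne_of_gt hζ
  have hsqs : Real.sqrt (Sfn ζ t) ≠ 0 := by positivity
  have hsqD : Real.sqrt (1 - Real.exp (-(ζ * t)) ^ 2) ≠ 0 := by positivity
  have hc1 : (Real.sqrt (2 * Real.pi)) * Real.sqrt (Sfn ζ t) ≠ 0 := by positivity
  have hc1s : (Real.sqrt (2 * Real.pi)) ≠ 0 := by positivity
  unfold ker
  have hma : HasDerivAt (fun τ : ℝ => -(ζ * τ)) (-ζ) t := by
    have := ((hasDerivAt_id' t).const_mul ζ).neg
    refine this.congr_deriv ?_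
    ring
  have hE : HasDerivAt (fun τ : ℝ => Real.exp (-(ζ * τ))) (-(ζ * Real.exp (-(ζ * t)))) t := by
    have := hma.exp
    refine this.congr_deriv ?_
    ring
  have h1mE : HasDerivAt (fun τ : ℝ => 1 - Real.exp (-(ζ * τ))) (ζ * Real.exp (-(ζ * t))) t := by
    have := hE.const_sub 1
    refine this.congr_deriv ?_
    ring
  have h1pE : HasDerivAt (fun τ : ℝ => 1 + Real.exp (-(ζ * τ))) (-(ζ * Real.exp (-(ζ * t)))) t := hE.const_add 1
  have hT : HasDerivAt (fun τ : ℝ => (1 - Real.exp (-(ζ * τ))) / (1 + Real.exp (-(ζ * τ))))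
      (2 * ζ * Real.exp (-(ζ * t)) / (1 + Real.exp (-(ζ * t))) ^ 2) t := by
    have H := h1mE.div h1pE h1E
    refine H.congr_deriv ?_
    field_simp
    ring
  have hSd : HasDerivAt (fun τ : ℝ => Sfn ζ τ) (((1 - Real.exp (-(ζ * t))) ^ 2 / (ζ ^ 2 * (1 + Real.exp (-(ζ * t))) ^ 2))) t := by
    unfold Sfn
    have H := ((hasDerivAt_id' t).div_const (ζ ^ 2)).sub (hT.const_mul (2 / ζ ^ 3))
    refine H.congr_deriv ?_
    field_simp
    ring
  have hg : HasDerivAt (fun τ : ℝ => y' - y * Real.exp (-(ζ * τ))) (ζ * y * Real.exp (-(ζ * t))) t := by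
    have := (hE.const_mul y).const_sub y'
    refine this.congr_deriv ?_
    ring
  have hL : HasDerivAt (fun τ : ℝ => x - x' - y / ζ * (1 - Real.exp (-(ζ * τ)))
      - 1 / ζ * (y' - y * Real.exp (-(ζ * τ))) * ((1 - Real.exp (-(ζ * τ))) / (1 + Real.exp (-(ζ * τ)))))
      (-((y * Real.exp (-(ζ * t)) * (1 + ((1 - Real.exp (-(ζ * t))) / (1 + Real.exp (-(ζ * t))))) + 2 * Real.exp (-(ζ * t)) * (y' - y * Real.exp (-(ζ * t))) / (1 + Real.exp (-(ζ * t))) ^ 2))) t := by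
    have H := ((h1mE.const_mul (y / ζ)).const_sub (x - x')).sub
      ((hg.const_mul (1/ζ)).mul hT)
    refine H.congr_deriv ?_
    field_simp
    ring
  have hu1 : HasDerivAt (fun τ : ℝ => -(x - x' - y / ζ * (1 - Real.exp (-(ζ * τ)))
      - 1 / ζ * (y' - y * Real.exp (-(ζ * τ))) * ((1 - Real.exp (-(ζ * τ))) / (1 + Real.exp (-(ζ * τ))))) ^ 2 / (2 * Sfn ζ τ))
      ((x - x' - y / ζ * (1 - Real.exp (-(ζ * t))) - 1 / ζ * (y' - y * Real.exp (-(ζ * t))) * ((1 - Real.exp (-(ζ * t))) / (1 + Real.exp (-(ζ * t))))) * (y * Real.exp (-(ζ * t)) * (1 + ((1 - Real.exp (-(ζ * t))) / (1 + Real.exp (-(ζ * t))))) + 2 * Real.exp (-(ζ * t)) * (y' - y * Real.exp (-(ζ * t))) / (1 + Real.exp (-(ζ * t))) ^ 2) / Sfn ζ t + (x - x' - y / ζ * (1 - Real.exp (-(ζ * t))) - 1 / ζ * (y' - y * Real.exp (-(ζ * t))) * ((1 - Real.exp (-(ζ * t))) / (1 + Real.exp (-(ζ * t))))) ^ 2 *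 ((1 - Real.exp (-(ζ * t))) ^ 2 / (ζ ^ 2 * (1 + Real.exp (-(ζ * t))) ^ 2)) / (2 * Sfn ζ t ^ 2)) t := by
    have H := ((hL.pow 2).neg).div (hSd.const_mul 2) (by positivity)
    refine H.congr_deriv ?_
    push_cast
    simp only [Pi.neg_apply, Pi.pow_apply]
    field_simp
    ring
  have hpre : HasDerivAt (fun τ : ℝ => 1 / (Real.sqrt (2 * Real.pi) * Real.sqrt (Sfn ζ τ)))
      ((-(((1 - Real.exp (-(ζ * t))) ^ 2 / (ζ ^ 2 * (1 + Real.exp (-(ζ * t))) ^ 2)) / (2 * Sfn ζ t))) * (1 / (Real.sqrt (2 * Real.pi) * Real.sqrt (Sfn ζ t)))) t := by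
    have H := (hasDerivAt_const t (1:ℝ)).div ((hSd.sqrt hs).const_mul (Real.sqrt (2 * Real.pi))) hc1
    refine H.congr_deriv ?_
    set a := Real.sqrt (Sfn ζ t) with ha
    rw [show Sfn ζ t = a ^ 2 by rw [ha]; exact (Real.sq_sqrt hspos.le).symm]
    field_simp
    ring
  have hfirst : HasDerivAt (fun τ : ℝ => 1 / (Real.sqrt (2 * Real.pi) * Real.sqrt (Sfn ζ τ)) *
      Real.exp (-(x - x' - y / ζ * (1 - Real.exp (-(ζ * τ)))
        - 1 / ζ * (y' - y * Real.exp (-(ζ * τ))) * ((1 - Real.exp (-(ζ * τ))) / (1 + Real.exp (-(ζ * τ))))) ^ 2 / (2 * Sfn ζ τ)))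
      ((((x - x' - y / ζ * (1 - Real.exp (-(ζ * t))) - 1 / ζ * (y' - y * Real.exp (-(ζ * t))) * ((1 - Real.exp (-(ζ * t))) / (1 + Real.exp (-(ζ * t))))) * (y * Real.exp (-(ζ * t)) * (1 + ((1 - Real.exp (-(ζ * t))) / (1 + Real.exp (-(ζ * t))))) + 2 * Real.exp (-(ζ * t)) * (y' - y * Real.exp (-(ζ * t))) / (1 + Real.exp (-(ζ * t))) ^ 2) / Sfn ζ t + (x - x' - y / ζ * (1 - Real.exp (-(ζ * t))) - 1 / ζ * (y' - y * Real.exp (-(ζ * t))) * ((1 - Real.exp (-(ζ * t))) / (1 + Real.exp (-(ζ * t))))) ^ 2 * ((1 - Real.exp (-(ζ * t))) ^ 2 / (ζ ^ 2 * (1 + Real.exp (-(ζ * t))) ^ 2)) / (2 * Sfn ζ t ^ 2)) - ((1 - Real.exp (-(ζ * t))) ^ 2 / (ζ ^ 2 * (1 + Real.exp (-(ζ * t))) ^ 2)) / (2 * Sfn ζ t)) *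
        (1 / (Real.sqrt (2 * Real.pi) * Real.sqrt (Sfn ζ t)) *
          Real.exp (-((x - x' - y / ζ * (1 - Real.exp (-(ζ * t))) - 1 / ζ * (y' - y * Real.exp (-(ζ * t))) * ((1 - Real.exp (-(ζ * t))) / (1 + Real.exp (-(ζ * t)))))) ^ 2 / (2 * Sfn ζ t)))) t := by
    have H := hpre.mul hu1.exp
    refine H.congr_deriv ?_
    ring
  have hDd : HasDerivAt (fun τ : ℝ => 1 - Real.exp (-(ζ * τ)) ^ 2) (2 * ζ * Real.exp (-(ζ * t)) ^ 2) t := by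
    have H := (hE.pow 2).const_sub 1
    refine H.congr_deriv ?_
    norm_num
    ring
  have hu2 : HasDerivAt (fun τ : ℝ => -(ζ * (y' - y * Real.exp (-(ζ * τ))) ^ 2 / (1 - Real.exp (-(ζ * τ)) ^ 2)))
      (-((2 * ζ ^ 2 * y * Real.exp (-(ζ * t)) * (y' - y * Real.exp (-(ζ * t))) * (1 - Real.exp (-(ζ * t)) ^ 2) - 2 * ζ ^ 2 * Real.exp (-(ζ * t)) ^ 2 * (y' - y * Real.exp (-(ζ * t))) ^ 2) / (1 - Real.exp (-(ζ * t)) ^ 2) ^ 2)) t := by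
    have H := (((hg.pow 2).const_mul ζ).div hDd hD).neg
    refine H.congr_deriv ?_
    norm_num
    ring
  have hsecond : HasDerivAt (fun τ : ℝ => Real.sqrt (ζ / Real.pi) *
      Real.exp (-(ζ * (y' - y * Real.exp (-(ζ * τ))) ^ 2 / (1 - Real.exp (-(ζ * τ)) ^ 2))) / Real.sqrt (1 - Real.exp (-(ζ * τ)) ^ 2))
      (((-((2 * ζ ^ 2 * y * Real.exp (-(ζ * t)) * (y' - y * Real.exp (-(ζ * t))) * (1 - Real.exp (-(ζ * t)) ^ 2) - 2 * ζ ^ 2 * Real.exp (-(ζ * t)) ^ 2 * (y' - y * Real.exp (-(ζ * t))) ^ 2) / (1 - Real.exp (-(ζ * t)) ^ 2) ^ 2))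
          - ζ * Real.exp (-(ζ * t)) ^ 2 / (1 - Real.exp (-(ζ * t)) ^ 2)) *
        (Real.sqrt (ζ / Real.pi) * Real.exp (-(ζ * (y' - y * Real.exp (-(ζ * t))) ^ 2 / (1 - Real.exp (-(ζ * t)) ^ 2))) / Real.sqrt (1 - Real.exp (-(ζ * t)) ^ 2))) t := by
    have H := (hu2.exp.const_mul (Real.sqrt (ζ / Real.pi))).div (hDd.sqrt hD) hsqD
    refine H.congr_deriv ?_
    generalize Real.exp (-(ζ * (y' - y * Real.exp (-(ζ * t))) ^ 2 / (1 - Real.exp (-(ζ * t)) ^ 2))) = Ex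
    set b := Real.sqrt (1 - Real.exp (-(ζ * t)) ^ 2) with hb
    rw [show (1:ℝ) - Real.exp (-(ζ * t)) ^ 2 = b ^ 2 by rw [hb]; exact (Real.sq_sqrt hDpos.le).symm]
    field_simp
  have H := hfirst.mul hsecond
  refine H.congr_deriv ?_
  ring


set_option maxHeartbeats 4000000 in
/-- Section 3.2, PDE-verification form: the explicit kernel of the
Ornstein–Uhlenbeck Kolmogorov hypoelliptic equation satisfies
`∂ₜ p = ½ ∂²_y p - ζ y ∂_y p - y ∂ₓ p` for all `t > 0`. -/
theorem stmt_10 (ζ : ℝ) (hζ : 0 < ζ) (x' y' : ℝ)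
    (σsqξ : ℝ → ℝ)
    (hσξ : ∀ t, σsqξ t =
      (1 / ζ ^ 2) * (∫ u in (0:ℝ)..t, (1 - Real.exp (-(ζ * (t - u)))) ^ 2)
        - (1 - Real.exp (-(ζ * t))) ^ 3 / (2 * ζ ^ 3 * (1 + Real.exp (-(ζ * t)))))
    (p : ℝ → ℝ → ℝ → ℝ)
    (hp : ∀ (t x y : ℝ), p t x y =
      (1 / (Real.sqrt (2 * Real.pi) * Real.sqrt (σsqξ t))) *
        Real.exp (-(x - x' - y / ζ * (1 - Real.exp (-(ζ * t)))
            - (1 / ζ) * (y' - y * Real.exp (-(ζ * t))) * Real.tanh (ζ * t / 2)) ^ 2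
          / (2 * σsqξ t)) *
        (Real.sqrt (ζ / Real.pi) *
          Real.exp (-(ζ * (y' - y * Real.exp (-(ζ * t))) ^ 2 / (1 - Real.exp (-(2 * ζ * t)))))
            / Real.sqrt (1 - Real.exp (-(2 * ζ * t))))) :
    ∀ t > (0 : ℝ), ∀ (x y : ℝ),
      deriv (fun τ : ℝ => p τ x y) t =
        (1 / 2 : ℝ) * iteratedDeriv 2 (fun v : ℝ => p t x v) y
          - ζ * y * deriv (fun v : ℝ => p t x v) y
          - y * deriv (fun u : ℝ => p t u y) x := by
  intro t ht x y
  have hζ' : ζ ≠ 0 := ne_of_gt hζ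
  have hSeq : ∀ τ : ℝ, σsqξ τ = Sfn ζ τ := by
    intro τ
    have hE2 : Real.exp (-(2*ζ*τ)) = Real.exp (-(ζ*τ)) ^ 2 := by
      rw [sq, ← Real.exp_add]; ring_nf
    have h1E : (0:ℝ) < 1 + Real.exp (-(ζ*τ)) := by positivity
    rw [hσξ, integ ζ hζ' τ, hE2]
    unfold Sfn
    field_simp
    ring
  have hE2' : ∀ τ : ℝ, Real.exp (-(2 * ζ * τ)) = Real.exp (-(ζ * τ)) ^ 2 := by
    intro τ; rw [sq, ← Real.exp_add]; ring_nf
  have e1 : (fun τ : ℝ => p τ x y) = fun τ => ker ζ x' y' τ x y := by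
    funext τ; rw [hp, hSeq, hE2', tanh_formula]; rfl
  have e2 : (fun v : ℝ => p t x v) = fun v => ker ζ x' y' t x v := by
    funext v; rw [hp, hSeq, hE2', tanh_formula]; rfl
  have e3 : (fun u : ℝ => p t u y) = fun u => ker ζ x' y' t u y := by
    funext u; rw [hp, hSeq, hE2', tanh_formula]; rfl
  rw [e1, e2, e3, iteratedDeriv_succ, iteratedDeriv_one]
  rw [(ker_t ζ x' y' t x y hζ ht).deriv, (ker_x ζ x' y' t x y hζ ht).deriv,
    (ker_y ζ x' y' t x hζ ht y).deriv]
  have hdy : deriv (fun v => ker ζ x' y' t x v) = fun v => ((x - x' - v / ζ * (1 - Real.exp (-(ζ * t))) - 1 / ζ * (y' - v * Real.exp (-(ζ * t))) * ((1 - Real.exp (-(ζ * t))) / (1 + Real.exp (-(ζ * t))))) * ((1 - Real.exp (-(ζ * t))) / (1 + Real.exp (-(ζ * t)))) / (ζ * Sfn ζ t) + 2 * ζ * Real.exp (-(ζ * t)) * (y' - v * Real.exp (-(ζ * t))) / (1 - Real.exp (-(ζ * t)) ^ 2)) * ker ζ x' y' t x v := by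
    funext v; exact (ker_y ζ x' y' t x hζ ht v).deriv
  rw [hdy, (ker_yy ζ x' y' t x y hζ ht).deriv]
  have hspos : 0 < Sfn ζ t := Sfn_pos hζ ht
  have hs : Sfn ζ t ≠ 0 := ne_of_gt hspos
  have hE1 : Real.exp (-(ζ * t)) < 1 := exp_lt_one' hζ ht
  have hEpos : (0:ℝ) < Real.exp (-(ζ * t)) := Real.exp_pos _
  have hDpos : (0:ℝ) < 1 - Real.exp (-(ζ * t)) ^ 2 := by nlinarith
  have hD : (1:ℝ) - Real.exp (-(ζ * t)) ^ 2 ≠ 0 := ne_of_gt hDpos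
  have h1Epos : (0:ℝ) < 1 + Real.exp (-(ζ * t)) := by positivity
  have h1E : (1:ℝ) + Real.exp (-(ζ * t)) ≠ 0 := ne_of_gt h1Epos
  have hscal : ((x - x' - y / ζ * (1 - Real.exp (-(ζ * t))) - 1 / ζ * (y' - y * Real.exp (-(ζ * t))) * ((1 - Real.exp (-(ζ * t))) / (1 + Real.exp (-(ζ * t))))) * (y * Real.exp (-(ζ * t)) * (1 + ((1 - Real.exp (-(ζ * t))) / (1 + Real.exp (-(ζ * t))))) + 2 * Real.exp (-(ζ * t)) * (y' - y * Real.exp (-(ζ * t))) / (1 + Real.exp (-(ζ * t))) ^ 2) / Sfn ζ t + (x - x' - y / ζ * (1 - Real.exp (-(ζ * t))) - 1 / ζ * (y' - y * Real.exp (-(ζ * t))) * ((1 - Real.exp (-(ζ * t))) / (1 + Real.exp (-(ζ * t))))) ^ 2 * ((1 - Real.exp (-(ζ * t))) ^ 2 / (ζ ^ 2 * (1 + Real.exp (-(ζ * t))) ^ 2)) / (2 * Sfn ζ t ^ 2) - (2 * ζ ^ 2 * y * Real.exp (-(ζ * t)) * (y' - y * Real.exp (-(ζ * t))) * (1 - Real.exp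 (-(ζ * t)) ^ 2) - 2 * ζ ^ 2 * Real.exp (-(ζ * t)) ^ 2 * (y' - y * Real.exp (-(ζ * t))) ^ 2) / (1 - Real.exp (-(ζ * t)) ^ 2) ^ 2 - ((1 - Real.exp (-(ζ * t))) ^ 2 / (ζ ^ 2 * (1 + Real.exp (-(ζ * t))) ^ 2)) / (2 * Sfn ζ t) - ζ * Real.exp (-(ζ * t)) ^ 2 / (1 - Real.exp (-(ζ * t)) ^ 2)) =
      (1 / 2 : ℝ) * ((-(((1 - Real.exp (-(ζ * t))) / (1 + Real.exp (-(ζ * t)))) * ((1 - Real.exp (-(ζ * t))) / (1 + Real.exp (-(ζ * t)))) / (ζ ^ 2 * Sfn ζ t)) - 2 * ζ * Real.exp (-(ζ * t)) ^ 2 / (1 - Real.exp (-(ζ * t)) ^ 2)) + ((x - x' - y / ζ * (1 - Real.exp (-(ζ * t))) - 1 / ζ * (y' - y * Real.exp (-(ζ * t))) * ((1 - Real.exp (-(ζ * t))) / (1 + Real.exp (-(ζ * t))))) * ((1 - Real.exp (-(ζ * t))) / (1 + Real.exp (-(ζ * t)))) / (ζ * Sfn ζ t) + 2 * ζ * Real.exp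 (-(ζ * t)) * (y' - y * Real.exp (-(ζ * t))) / (1 - Real.exp (-(ζ * t)) ^ 2)) * ((x - x' - y / ζ * (1 - Real.exp (-(ζ * t))) - 1 / ζ * (y' - y * Real.exp (-(ζ * t))) * ((1 - Real.exp (-(ζ * t))) / (1 + Real.exp (-(ζ * t))))) * ((1 - Real.exp (-(ζ * t))) / (1 + Real.exp (-(ζ * t)))) / (ζ * Sfn ζ t) + 2 * ζ * Real.exp (-(ζ * t)) * (y' - y * Real.exp (-(ζ * t))) / (1 - Real.exp (-(ζ * t)) ^ 2)))
        - ζ * y * ((x - x' - y / ζ * (1 - Real.exp (-(ζ * t))) - 1 / ζ * (y' - y * Real.exp (-(ζ * t))) * ((1 - Real.exp (-(ζ * t))) / (1 + Real.exp (-(ζ * t))))) * ((1 - Real.exp (-(ζ * t))) / (1 + Real.exp (-(ζ * t)))) / (ζ * Sfn ζ t) + 2 * ζ * Real.exp (-(ζ * t)) * (y' - y * Real.exp (-(ζ * t))) / (1 - Real.exp (-(ζ * t)) ^ 2)) - y * (-((x - x' - y / ζ * (1 - Real.exp (-(ζ * t))) - 1 / ζ * (y' - y * Real.exp (-(ζ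 * t))) * ((1 - Real.exp (-(ζ * t))) / (1 + Real.exp (-(ζ * t))))) / Sfn ζ t)) := by
    field_simp
    ring
  linear_combination (ker ζ x' y' t x y) * hscal
end

section
/- Let d ≥ 1 and let c : ℝ^d → ℝ be twice continuously differentiable such that every entry of its Hessian satisfies |∂²_{ij} c(u)| ≤ C(1 + ‖u‖²) for all u ∈ ℝ^d, for some constant C > 0. Let F(y,y',w) = ∫_0^1 ∫_0^1 h · ⟨ s(y'-y) + w(s), (∇²c)( y + (1-h)(s(y'-y) + w(s)) ) ( s(y'-y) + w(s) ) ⟩ dh ds for y, y' ∈ ℝ^d and continuous w : [0,1] → ℝ^d, and write ‖w‖_∞ = sup_{s ∈ [0,1]} ‖w(s)‖. Then |F(y,y',w)| ≤ (dC/2) · ( ‖y'-y‖ + ‖w‖_∞ )² · ( 1 + ( ‖y‖ + ‖y'-y‖ + ‖w‖_∞ )² ). -/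
set_option maxHeartbeats 800000


open scoped RealInnerProductSpace

/-- The Taylor remainder `F(y,y',w)` of Step 2 of Section 4. -/
noncomputable def taylorRemainder {d : ℕ} (c : EuclideanSpace ℝ (Fin d) → ℝ)
    (y y' : EuclideanSpace ℝ (Fin d)) (w : ℝ → EuclideanSpace ℝ (Fin d)) : ℝ :=
  ∫ s in (0:ℝ)..1, ∫ h in (0:ℝ)..1,
    h * (fderiv ℝ (fderiv ℝ c) (y + (1 - h) • (s • (y' - y) + w s))
      (s • (y' - y) + w s)) (s • (y' - y) + w s)

/-- Bound on a bilinear form from entrywise bounds. -/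
lemma bilin_bound {d : ℕ} (B : EuclideanSpace ℝ (Fin d) →L[ℝ] (EuclideanSpace ℝ (Fin d) →L[ℝ] ℝ))
    (K : ℝ) (hK : 0 ≤ K)
    (hB : ∀ i j, |(B (EuclideanSpace.single i (1:ℝ))) (EuclideanSpace.single j (1:ℝ))| ≤ K)
    (v : EuclideanSpace ℝ (Fin d)) :
    |(B v) v| ≤ (d : ℝ) * K * ‖v‖ ^ 2 := by
  have hv : v = ∑ i, v i • EuclideanSpace.single i (1:ℝ) := by
    have := (EuclideanSpace.basisFun (Fin d) ℝ).sum_repr v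
    simpa [EuclideanSpace.basisFun_apply] using this.symm
  have hexp : (B v) v = ∑ i, ∑ j, v i * (v j *
      (B (EuclideanSpace.single i 1)) (EuclideanSpace.single j 1)) := by
    conv_lhs => rw [hv]
    simp [map_sum, map_smul, ContinuousLinearMap.sum_apply, ContinuousLinearMap.smul_apply,
      smul_eq_mul, Finset.mul_sum]
    rw [Finset.sum_comm]
    exact Finset.sum_congr rfl fun i _ => Finset.sum_congr rfl fun j _ => by ring
  have hnorm : ‖v‖ ^ 2 = ∑ i, (v i) ^ 2 := by
    rw [EuclideanSpace.norm_eq, Real.sq_sqrt (by positivity)]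
    simp [sq_abs]
  have h1 : |(B v) v| ≤ ∑ i, ∑ j, |v i| * |v j| * K := by
    rw [hexp]
    refine (Finset.abs_sum_le_sum_abs _ _).trans (Finset.sum_le_sum fun i _ => ?_)
    refine (Finset.abs_sum_le_sum_abs _ _).trans (Finset.sum_le_sum fun j _ => ?_)
    rw [abs_mul, abs_mul, mul_assoc]
    exact mul_le_mul_of_nonneg_left (mul_le_mul_of_nonneg_left (hB i j) (abs_nonneg _))
      (abs_nonneg _)
  have h2 : ∑ i, ∑ j, |v i| * |v j| * K = (∑ i, |v i|) ^ 2 * K := by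
    rw [sq, Finset.sum_mul_sum, Finset.sum_mul]
    exact Finset.sum_congr rfl fun i _ => by rw [Finset.sum_mul]
  have h3 : (∑ i, |v i|) ^ 2 ≤ (d : ℝ) * ∑ i, (v i) ^ 2 := by
    simpa [sq_abs] using
      sq_sum_le_card_mul_sum_sq (s := (Finset.univ : Finset (Fin d))) (f := fun i => |v i|)
  calc |(B v) v| ≤ (∑ i, |v i|) ^ 2 * K := by rw [← h2]; exact h1
    _ ≤ ((d : ℝ) * ∑ i, (v i) ^ 2) * K := mul_le_mul_of_nonneg_right h3 hK
    _ = (d : ℝ) * K * ‖v‖ ^ 2 := by rw [hnorm]; ring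

/-- inequality (4.5) of Section 4: under the quadratic-growth bound
`|∂²ᵢⱼc(u)| ≤ C(1 + ‖u‖²)` on every Hessian entry, the Taylor remainder satisfies
`|F(y,y',w)| ≤ (dC/2)(‖y'-y‖ + ‖w‖_∞)²(1 + (‖y‖ + ‖y'-y‖ + ‖w‖_∞)²)`. -/
theorem stmt_12 (d : ℕ) (hd : 1 ≤ d) (c : EuclideanSpace ℝ (Fin d) → ℝ)
    (hc : ContDiff ℝ 2 c) (C : ℝ) (hC : 0 < C)
    (hHess : ∀ (u : EuclideanSpace ℝ (Fin d)) (i j : Fin d),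
      |(fderiv ℝ (fderiv ℝ c) u (EuclideanSpace.single i (1:ℝ)))
          (EuclideanSpace.single j (1:ℝ))| ≤ C * (1 + ‖u‖ ^ 2))
    (y y' : EuclideanSpace ℝ (Fin d)) (w : ℝ → EuclideanSpace ℝ (Fin d))
    (hw : ContinuousOn w (Set.Icc 0 1)) :
    |taylorRemainder c y y' w| ≤
      ((d : ℝ) * C / 2) * (‖y' - y‖ + sSup ((fun s => ‖w s‖) '' Set.Icc (0:ℝ) 1)) ^ 2 *
        (1 + (‖y‖ + ‖y' - y‖ + sSup ((fun s => ‖w s‖) '' Set.Icc (0:ℝ) 1)) ^ 2) := by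
  set M := sSup ((fun s => ‖w s‖) '' Set.Icc (0:ℝ) 1) with hM
  have hbdd : BddAbove ((fun s => ‖w s‖) '' Set.Icc (0:ℝ) 1) :=
    (isCompact_Icc.image_of_continuousOn hw.norm).bddAbove
  have hMw : ∀ s ∈ Set.Icc (0:ℝ) 1, ‖w s‖ ≤ M := fun s hs =>
    le_csSup hbdd ⟨s, hs, rfl⟩
  have hM0 : (0:ℝ) ≤ M := le_trans (norm_nonneg (w 0)) (hMw 0 (by norm_num))
  set R := ‖y' - y‖ + M with hR
  have hR0 : (0:ℝ) ≤ R := add_nonneg (norm_nonneg _) hM0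
  set Q := ‖y‖ + R with hQ
  have hQ0 : (0:ℝ) ≤ Q := add_nonneg (norm_nonneg _) hR0
  set K := (d:ℝ) * C * (1 + Q ^ 2) * R ^ 2 with hK
  have hK0 : (0:ℝ) ≤ K := by positivity
  have hBcont : Continuous (fderiv ℝ (fderiv ℝ c)) := by
    have h1 : ContDiff ℝ 1 (fderiv ℝ c) := hc.fderiv_right (by norm_num)
    exact h1.continuous_fderiv one_ne_zero
  have hBb : ∀ u v : EuclideanSpace ℝ (Fin d), ‖v‖ ≤ R → ‖u‖ ≤ Q →
      |(fderiv ℝ (fderiv ℝ c) u v) v| ≤ K := by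
    intro u v hvR huQ
    have hb := bilin_bound (fderiv ℝ (fderiv ℝ c) u) (C * (1 + ‖u‖ ^ 2)) (by positivity)
      (fun i j => hHess u i j) v
    have h1 : ‖u‖ ^ 2 ≤ Q ^ 2 := pow_le_pow_left₀ (norm_nonneg u) huQ 2
    have h2 : ‖v‖ ^ 2 ≤ R ^ 2 := pow_le_pow_left₀ (norm_nonneg v) hvR 2
    calc |(fderiv ℝ (fderiv ℝ c) u v) v|
        ≤ (d:ℝ) * (C * (1 + ‖u‖ ^ 2)) * ‖v‖ ^ 2 := hb
      _ = ((d:ℝ) * C) * ((1 + ‖u‖ ^ 2) * ‖v‖ ^ 2) := by ring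
      _ ≤ ((d:ℝ) * C) * ((1 + Q ^ 2) * R ^ 2) := by
          refine mul_le_mul_of_nonneg_left ?_ (by positivity)
          exact mul_le_mul (by linarith) h2 (sq_nonneg _) (by positivity)
      _ = K := by rw [hK]; ring
  have hinner : ∀ s ∈ Set.Icc (0:ℝ) 1,
      |∫ h in (0:ℝ)..1, h * (fderiv ℝ (fderiv ℝ c) (y + (1 - h) • (s • (y' - y) + w s))
        (s • (y' - y) + w s)) (s • (y' - y) + w s)| ≤ K / 2 := by
    intro s hs
    set v := s • (y' - y) + w s with hv
    have hvR : ‖v‖ ≤ R := by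
      calc ‖v‖ ≤ ‖s • (y' - y)‖ + ‖w s‖ := norm_add_le _ _
        _ ≤ ‖y' - y‖ + M := by
            refine add_le_add ?_ (hMw s hs)
            rw [norm_smul, Real.norm_eq_abs, abs_of_nonneg hs.1]
            nlinarith [norm_nonneg (y' - y), hs.2]
    have hcont : Continuous (fun h : ℝ => h *
        (fderiv ℝ (fderiv ℝ c) (y + (1 - h) • v) v) v) := by
      have h1 : Continuous fun h : ℝ => y + (1 - h) • v :=
        continuous_const.add ((continuous_const.sub continuous_id).smul continuous_const)
      have h2 : Continuous fun h : ℝ => fderiv ℝ (fderiv ℝ c) (y + (1 - h) • v) :=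
        hBcont.comp h1
      exact continuous_id.mul ((h2.clm_apply continuous_const).clm_apply continuous_const)
    have hptw : ∀ h ∈ Set.Icc (0:ℝ) 1,
        |h * (fderiv ℝ (fderiv ℝ c) (y + (1 - h) • v) v) v| ≤ h * K := by
      intro h hh
      have huQ : ‖y + (1 - h) • v‖ ≤ Q := by
        calc ‖y + (1 - h) • v‖ ≤ ‖y‖ + ‖(1 - h) • v‖ := norm_add_le _ _
          _ ≤ ‖y‖ + R := by
              refine add_le_add le_rfl ?_
              rw [norm_smul, Real.norm_eq_abs, abs_of_nonneg (by linarith [hh.2])]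
              nlinarith [norm_nonneg v, hh.1, hh.2]
      rw [abs_mul, abs_of_nonneg hh.1]
      exact mul_le_mul_of_nonneg_left (hBb _ v hvR huQ) hh.1
    calc |∫ h in (0:ℝ)..1, h * (fderiv ℝ (fderiv ℝ c) (y + (1 - h) • v) v) v|
        ≤ ∫ h in (0:ℝ)..1, |h * (fderiv ℝ (fderiv ℝ c) (y + (1 - h) • v) v) v| :=
          intervalIntegral.abs_integral_le_integral_abs (by norm_num)
      _ ≤ ∫ h in (0:ℝ)..1, h * K := by
          refine intervalIntegral.integral_mono_on (by norm_num) ?_ ?_ hptw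
          · exact hcont.abs.intervalIntegrable _ _
          · exact (continuous_id.mul continuous_const).intervalIntegrable _ _
      _ = K / 2 := by
          rw [intervalIntegral.integral_mul_const, integral_id]
          ring
  have houter : ‖∫ s in (0:ℝ)..1, ∫ h in (0:ℝ)..1,
      h * (fderiv ℝ (fderiv ℝ c) (y + (1 - h) • (s • (y' - y) + w s))
        (s • (y' - y) + w s)) (s • (y' - y) + w s)‖ ≤ K / 2 * |1 - 0| := by
    refine intervalIntegral.norm_integral_le_of_norm_le_const ?_
    intro s hs
    rw [Set.uIoc_of_le (by norm_num : (0:ℝ) ≤ 1)] at hs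
    rw [Real.norm_eq_abs]
    exact hinner s (Set.Ioc_subset_Icc_self hs)
  have hQQ : ‖y‖ + ‖y' - y‖ + M = Q := by rw [hQ, hR, add_assoc]
  rw [hQQ]
  have : |taylorRemainder c y y' w| ≤ K / 2 := by
    rw [taylorRemainder, ← Real.norm_eq_abs]
    simpa using houter
  calc |taylorRemainder c y y' w| ≤ K / 2 := this
    _ = ((d : ℝ) * C / 2) * R ^ 2 * (1 + Q ^ 2) := by rw [hK]; ring
end
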